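/- arXiv:1608.01992 — 13 statements merged into one kernel-verified Lean document; each statement's English description precedes it below -/
import Mathlib

section
/- For positive integers a, b, c and a positive integer m that is not a perfect square, the pair (a, b+c√m) generates the unit ideal in ℤ[√m] (i.e., there exist x, y ∈ ℤ[√m] with ax + (b+c√m)y = 1) if and only if gcd(a, b² - c²m) = 1. -/
/-- `x` lies in `ℤ[√m] ⊆ ℝ`. -/
def inZsqrt (m : ℤ) (x : ℝ) : Prop := ∃ p q : ℤ, x = p + q * Real.sqrt m

lemma aux_irr {m : ℤ} (hirr : Irrational (Real.sqrt m)) (u v : ℤ)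
    (h : (u : ℝ) + v * Real.sqrt m = 0) : u = 0 ∧ v = 0 := by
  by_cases hv : v = 0
  · subst hv
    simp at h
    exact ⟨by exact_mod_cast h, rfl⟩
  · exfalso
    apply hirr
    refine ⟨(-u / v : ℚ), ?_⟩
    have hv' : (v : ℝ) ≠ 0 := Int.cast_ne_zero.mpr hv
    push_cast
    field_simp
    linarith
theorem stmt_0 (m a b c : ℤ) (hm : 0 < m) (hsq : ¬ IsSquare m)
    (ha : 0 < a) (hb : 0 < b) (hc : 0 < c) :
    (∃ x y : ℝ, inZsqrt m x ∧ inZsqrt m y ∧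
        (a : ℝ) * x + ((b : ℝ) + c * Real.sqrt m) * y = 1) ↔
      Int.gcd a (b ^ 2 - c ^ 2 * m) = 1 := by
  have hm0 : (0:ℝ) ≤ (m:ℝ) := by exact_mod_cast hm.le
  have hsm : Real.sqrt m * Real.sqrt m = (m : ℝ) := Real.mul_self_sqrt hm0
  have hirr : Irrational (Real.sqrt m) :=
    (irrational_sqrt_intCast_iff_of_nonneg hm.le).mpr hsq
  rw [← Int.isCoprime_iff_gcd_eq_one]
  constructor
  · rintro ⟨x, y, ⟨p, q, rfl⟩, ⟨r, s, rfl⟩, hxy⟩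
    have key : ((a*p + b*r + c*s*m - 1 : ℤ) : ℝ) +
        ((a*q + b*s + c*r : ℤ) : ℝ) * Real.sqrt m = 0 := by
      push_cast
      linear_combination hxy - (c:ℝ)*(s:ℝ)*hsm
    obtain ⟨h1, h2⟩ := aux_irr hirr _ _ key
    have e1 : a*p + b*r + c*s*m = 1 := by linarith
    have e2 : a*q + b*s + c*r = 0 := by linarith
    refine ⟨a*p^2 - a*m*q^2 + 2*b*p*r - 2*m*c*q*r + 2*c*p*s*m - 2*m*b*q*s,
      r^2 - m*s^2, ?_⟩
    linear_combination (a*p + b*r + c*s*m + 1) * e1 - m * (a*q + b*s + c*r) * e2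
  · rintro ⟨u, v, huv⟩
    refine ⟨(u : ℝ), (v*b : ℝ) + (-(v*c) : ℤ) * Real.sqrt m,
      ⟨u, 0, by push_cast; ring⟩, ⟨v*b, -(v*c), by push_cast; ring⟩, ?_⟩
    have : (u:ℝ)*a + (v:ℝ)*(b^2 - c^2*m) = 1 := by exact_mod_cast congrArg (Int.cast : ℤ → ℝ) huv
    push_cast
    linear_combination this - (v:ℝ)*(c:ℝ)^2*hsm
end

section
/- For positive integers a, b, c and a positive integer m not a perfect square, if gcd(a, b² - c²m) = 1, then for every A + B√m ∈ ℤ[√m] the equation ax + (b+c√m)y = A + B√m has a solution with x, y ∈ ℤ[√m]. -/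
theorem stmt_1 (m a b c : ℤ) (hm : 0 < m) (hsq : ¬ IsSquare m)
    (ha : 0 < a) (hb : 0 < b) (hc : 0 < c)
    (hgcd : Int.gcd a (b ^ 2 - c ^ 2 * m) = 1) :
    ∀ A B : ℤ, ∃ x y : ℝ, inZsqrt m x ∧ inZsqrt m y ∧
      (a : ℝ) * x + ((b : ℝ) + c * Real.sqrt m) * y = (A : ℝ) + B * Real.sqrt m := by
  intro A B
  set u := Int.gcdA a (b ^ 2 - c ^ 2 * m) with hu
  set v := Int.gcdB a (b ^ 2 - c ^ 2 * m) with hv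
  have hbez : (1 : ℤ) = a * u + (b ^ 2 - c ^ 2 * m) * v := by
    have h := Int.gcd_eq_gcd_ab a (b ^ 2 - c ^ 2 * m)
    rw [hgcd] at h
    exact_mod_cast h
  have hbezR : (1 : ℝ) = a * u + ((b : ℝ) ^ 2 - c ^ 2 * m) * v := by
    exact_mod_cast congrArg (Int.cast : ℤ → ℝ) hbez
  have hs : Real.sqrt m * Real.sqrt m = (m : ℝ) := by
    exact Real.mul_self_sqrt (le_of_lt (by exact_mod_cast hm))
  refine ⟨(u * A : ℤ) + (u * B : ℤ) * Real.sqrt m,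
    (v * (b * A - c * B * m) : ℤ) + (v * (b * B - c * A) : ℤ) * Real.sqrt m,
    ⟨u * A, u * B, rfl⟩, ⟨v * (b * A - c * B * m), v * (b * B - c * A), rfl⟩, ?_⟩
  push_cast
  linear_combination ((A : ℝ) + B * Real.sqrt m) * hbezR.symm +
    (c : ℝ) * v * (b * B - c * A) * hs
end

section
/- Suppose gcd(a, b² - c²m) = 1 and let (x̄, ȳ, z̄, w̄) be the unique solution in ℤ⁴ of ax + bz + cmw = A, ay + cz + bw = B with 0 ≤ z̄ < a and 0 ≤ w̄ < a. Then there exists a solution (x, y, z, w) ∈ ℕ⁴ of this system if and only if x̄ ≥ 0 and ȳ ≥ 0. -/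
theorem stmt_6 (m a b c : ℤ) (hm : 0 < m) (hsq : ¬ IsSquare m)
    (ha : 0 < a) (hb : 0 < b) (hc : 0 < c)
    (hgcd : Int.gcd a (b ^ 2 - c ^ 2 * m) = 1)
    (A B xb yb zb wb : ℤ)
    (hz : 0 ≤ zb) (hz' : zb < a) (hw : 0 ≤ wb) (hw' : wb < a)
    (h1 : a * xb + b * zb + c * m * wb = A)
    (h2 : a * yb + c * zb + b * wb = B) :
    (∃ x y z w : ℕ, a * x + b * z + c * m * w = A ∧ a * y + c * z + b * w = B) ↔
      0 ≤ xb ∧ 0 ≤ yb := by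
  constructor
  · rintro ⟨x, y, z, w, e1, e2⟩
    have hco : IsCoprime a (b ^ 2 - c ^ 2 * m) := Int.isCoprime_iff_gcd_eq_one.mpr hgcd
    have d1 : a ∣ (b ^ 2 - c ^ 2 * m) * ((z : ℤ) - zb) :=
      ⟨c * m * ((y : ℤ) - yb) - b * ((x : ℤ) - xb), by
        linear_combination b * e1 - b * h1 - c * m * e2 + c * m * h2⟩
    have d2 : a ∣ (b ^ 2 - c ^ 2 * m) * ((w : ℤ) - wb) :=
      ⟨c * ((x : ℤ) - xb) - b * ((y : ℤ) - yb), by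
        linear_combination b * e2 - b * h2 - c * e1 + c * h1⟩
    obtain ⟨k, hk⟩ := hco.dvd_of_dvd_mul_left d1
    obtain ⟨l, hl⟩ := hco.dvd_of_dvd_mul_left d2
    have hzn : (0 : ℤ) ≤ (z : ℤ) := Int.natCast_nonneg z
    have hwn : (0 : ℤ) ≤ (w : ℤ) := Int.natCast_nonneg w
    have hk0 : 0 ≤ k := by nlinarith
    have hl0 : 0 ≤ l := by nlinarith
    have hxb : a * xb = a * ((x : ℤ) + b * k + c * m * l) := by
      linear_combination h1 - e1 + b * hk + c * m * hl
    have hyb : a * yb = a * ((y : ℤ) + c * k + b * l) := by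
      linear_combination h2 - e2 + c * hk + b * hl
    have hxb' : xb = (x : ℤ) + b * k + c * m * l := mul_left_cancel₀ ha.ne' hxb
    have hyb' : yb = (y : ℤ) + c * k + b * l := mul_left_cancel₀ ha.ne' hyb
    have hbk : 0 ≤ b * k := mul_nonneg hb.le hk0
    have hcl : 0 ≤ c * k := mul_nonneg hc.le hk0
    have hbl : 0 ≤ b * l := mul_nonneg hb.le hl0
    have hcml : 0 ≤ c * m * l := mul_nonneg (mul_nonneg hc.le hm.le) hl0
    constructor
    · rw [hxb']; linarith
    · rw [hyb']; linarith
  · rintro ⟨hx, hy⟩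
    refine ⟨xb.toNat, yb.toNat, zb.toNat, wb.toNat, ?_, ?_⟩ <;>
      simp only [Int.toNat_of_nonneg hx, Int.toNat_of_nonneg hy, Int.toNat_of_nonneg hz,
        Int.toNat_of_nonneg hw] <;> assumption
end

section
/- Suppose gcd(a, b² - c²m) = 1. If A ≥ (a-1)(b-1+cm) and B ≥ (a-1)(b-1+c), then there exist x, y, z, w ∈ ℕ with ax + bz + cmw = A and ay + cz + bw = B (equivalently, a(x+y√m) + (b+c√m)(z+w√m) = A + B√m has a solution in ℕ[√m]). -/
theorem stmt_7 (m a b c : ℤ) (hm : 0 < m) (hsq : ¬ IsSquare m)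
    (ha : 0 < a) (hb : 0 < b) (hc : 0 < c)
    (hgcd : Int.gcd a (b ^ 2 - c ^ 2 * m) = 1) (A B : ℤ)
    (hA : (a - 1) * (b - 1 + c * m) ≤ A)
    (hB : (a - 1) * (b - 1 + c) ≤ B) :
    ∃ x y z w : ℕ, a * x + b * z + c * m * w = A ∧ a * y + c * z + b * w = B := by
  obtain ⟨u, v, huv⟩ := Int.isCoprime_iff_gcd_eq_one.mpr hgcd
  set Z : ℤ := v * (b * A - c * m * B) with hZ
  set W : ℤ := v * (b * B - c * A) with hW
  set z0 : ℤ := Z % a with hz0def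
  set w0 : ℤ := W % a with hw0def
  have ha0 : a ≠ 0 := ha.ne'
  have hz0 : 0 ≤ z0 := Int.emod_nonneg _ ha0
  have hw0 : 0 ≤ w0 := Int.emod_nonneg _ ha0
  have hz1 : z0 ≤ a - 1 := by have := Int.emod_lt_of_pos Z ha; omega
  have hw1 : w0 ≤ a - 1 := by have := Int.emod_lt_of_pos W ha; omega
  set x0 : ℤ := A * u + b * (Z / a) + c * m * (W / a) with hx0def
  set y0 : ℤ := B * u + c * (Z / a) + b * (W / a) with hy0def
  have hx' : A - b * z0 - c * m * w0 = a * x0 := by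
    rw [hx0def, hz0def, hw0def, Int.emod_def, Int.emod_def, hZ, hW]
    linear_combination (-A) * huv
  have hy' : B - c * z0 - b * w0 = a * y0 := by
    rw [hy0def, hz0def, hw0def, Int.emod_def, Int.emod_def, hZ, hW]
    linear_combination (-B) * huv
  have hbz : b * z0 ≤ b * (a - 1) := mul_le_mul_of_nonneg_left hz1 hb.le
  have hcz : c * z0 ≤ c * (a - 1) := mul_le_mul_of_nonneg_left hz1 hc.le
  have hbw : b * w0 ≤ b * (a - 1) := mul_le_mul_of_nonneg_left hw1 hb.le
  have hcmw : c * m * w0 ≤ c * m * (a - 1) :=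
    mul_le_mul_of_nonneg_left hw1 (by positivity)
  have hx0 : 0 ≤ x0 := by
    have h3 : a * (-1) < a * x0 := by nlinarith
    have := lt_of_mul_lt_mul_left h3 ha.le
    omega
  have hy0 : 0 ≤ y0 := by
    have h3 : a * (-1) < a * y0 := by nlinarith
    have := lt_of_mul_lt_mul_left h3 ha.le
    omega
  refine ⟨x0.toNat, y0.toNat, z0.toNat, w0.toNat, ?_, ?_⟩ <;>
    rw [Int.toNat_of_nonneg hz0, Int.toNat_of_nonneg hw0]
  · rw [Int.toNat_of_nonneg hx0]; linarith
  · rw [Int.toNat_of_nonneg hy0]; linarith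
end

section
/- Suppose gcd(a, b² - c²m) = 1. Let A = (a-1)(b-1+cm) - 1. Then for every k ∈ ℕ, setting B = (a-1)(b+c) + ak, the system ax + bz + cmw = A, ay + cz + bw = B has no solution with x, y, z, w ∈ ℕ. Hence no element of ℤ[√m] with rational part (a-1)(b-1+cm) - 1 lies in Frob(a, b+c√m). -/
/-- `x` lies in `ℕ[√m] ⊆ ℝ`. -/
def inNsqrt (m : ℤ) (x : ℝ) : Prop := ∃ p q : ℕ, x = p + q * Real.sqrt m

/-- `x ∈ SG(α, β)`, the semigroup of `ℕ[√m]`-combinations of `α` and `β`. -/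
def inSG (m : ℤ) (α β x : ℝ) : Prop :=
  ∃ l₁ l₂ : ℝ, inNsqrt m l₁ ∧ inNsqrt m l₂ ∧ x = l₁ * α + l₂ * β

/-- `w ∈ Frob(α, β)`: `w ∈ ℤ[√m]` and `w + ℕ[√m] ⊆ SG(α, β)`. -/
def inFrob (m : ℤ) (α β w : ℝ) : Prop :=
  inZsqrt m w ∧ ∀ n : ℝ, inNsqrt m n → inSG m α β (w + n)

/-!
Write `d = b² - c²m` and `A = (a-1)(b-1+cm) - 1`. Eliminating `x, y` from the system
`ax + bz + cmw = A`, `ay + cz + bw = (a-1)(b+c) + ak` (combine with `b, -cm` and with `-c, b`)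
leaves `d (z+1) ≡ 0` and `d (w+1) ≡ 0 (mod a)`. As `a` is prime to `d`, both `z` and `w` are at
least `a - 1`, and then already `bz + cmw ≥ (a-1)(b+cm) > A`.

For the Frobenius statement, adding a suitable `q√m` with `q ∈ ℕ` to `A + β√m` makes its irrational
part `(a-1)(b+c) + ak`; since `√m` is irrational, membership in `SG(a, b+c√m)` would give a natural
solution of the system.
-/

lemma Irrational.intCast_add_intCast_mul_inj {x : ℝ} (hx : Irrational x) {p q p' q' : ℤ}
    (h : (p : ℝ) + q * x = p' + q' * x) : p = p' ∧ q = q' := by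
  obtain rfl : q = q' := by
    by_contra hne
    refine (hx.intCast_mul (sub_ne_zero.2 hne)).ne_int (p' - p) ?_
    push_cast
    linarith
  exact ⟨by exact_mod_cast add_right_cancel h, rfl⟩

section System

variable {a b c m k x y z w : ℤ}

lemma dvd_add_one_of_system (hcop : IsCoprime a (b ^ 2 - c ^ 2 * m))
    (h₁ : a * x + b * z + c * m * w = (a - 1) * (b - 1 + c * m) - 1)
    (h₂ : a * y + c * z + b * w = (a - 1) * (b + c) + a * k) :
    a ∣ z + 1 ∧ a ∣ w + 1 := by
  constructor
  · refine hcop.dvd_of_dvd_mul_left ⟨b ^ 2 - c ^ 2 * m - b - c * m * k - b * x + c * m * y, ?_⟩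
    linear_combination b * h₁ - c * m * h₂
  · refine hcop.dvd_of_dvd_mul_left ⟨b ^ 2 - c ^ 2 * m + c + b * k + c * x - b * y, ?_⟩
    linear_combination -c * h₁ + b * h₂

lemma not_system_of_isCoprime (hcop : IsCoprime a (b ^ 2 - c ^ 2 * m))
    (ha : 0 < a) (hb : 0 ≤ b) (hcm : 0 ≤ c * m) (hx : 0 ≤ x) (hz : 0 ≤ z) (hw : 0 ≤ w) :
    ¬ (a * x + b * z + c * m * w = (a - 1) * (b - 1 + c * m) - 1 ∧
        a * y + c * z + b * w = (a - 1) * (b + c) + a * k) := by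
  rintro ⟨h₁, h₂⟩
  obtain ⟨hz₁, hw₁⟩ := dvd_add_one_of_system hcop h₁ h₂
  have hza : a - 1 ≤ z := by linarith [Int.le_of_dvd (by omega) hz₁]
  have hwa : a - 1 ≤ w := by linarith [Int.le_of_dvd (by omega) hw₁]
  nlinarith [mul_le_mul_of_nonneg_left hza hb, mul_le_mul_of_nonneg_left hwa hcm,
    mul_nonneg ha.le hx]

end System

lemma exists_nat_of_inSG {m a b c p q : ℤ} (hm : 0 ≤ m) (hirr : Irrational (Real.sqrt m))
    (h : inSG m a (b + c * Real.sqrt m) (p + q * Real.sqrt m)) :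
    ∃ x y z w : ℕ, a * x + b * z + c * m * w = p ∧ a * y + c * z + b * w = q := by
  obtain ⟨_, _, ⟨x, y, rfl⟩, ⟨z, w, rfl⟩, h⟩ := h
  have hsq : Real.sqrt m * Real.sqrt m = m := Real.mul_self_sqrt (by exact_mod_cast hm)
  have hcoeff : (p : ℝ) + q * Real.sqrt m =
      ((a * x + b * z + c * m * w : ℤ) : ℝ) + ((a * y + c * z + b * w : ℤ) : ℝ) * Real.sqrt m := by
    push_cast
    linear_combination h + (w * c : ℝ) * hsq
  obtain ⟨hp, hq⟩ := hirr.intCast_add_intCast_mul_inj hcoeff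
  exact ⟨x, y, z, w, hp.symm, hq.symm⟩

theorem stmt_8 (m a b c : ℤ) (hm : 0 < m) (hsq : ¬ IsSquare m)
    (ha : 0 < a) (hb : 0 < b) (hc : 0 < c)
    (hgcd : Int.gcd a (b ^ 2 - c ^ 2 * m) = 1) :
    (∀ k : ℕ,
      ¬ ∃ x y z w : ℕ,
        a * x + b * z + c * m * w = (a - 1) * (b - 1 + c * m) - 1 ∧
        a * y + c * z + b * w = (a - 1) * (b + c) + a * k) ∧
    ∀ β : ℤ,
      ¬ inFrob m (a : ℝ) ((b : ℝ) + c * Real.sqrt m)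
          (((a - 1) * (b - 1 + c * m) - 1 : ℤ) + (β : ℝ) * Real.sqrt m) := by
  have hcop : IsCoprime a (b ^ 2 - c ^ 2 * m) := Int.isCoprime_iff_gcd_eq_one.mpr hgcd
  have hsystem (k : ℕ) : ¬ ∃ x y z w : ℕ,
      a * x + b * z + c * m * w = (a - 1) * (b - 1 + c * m) - 1 ∧
      a * y + c * z + b * w = (a - 1) * (b + c) + a * k := by
    rintro ⟨x, y, z, w, h⟩
    exact not_system_of_isCoprime hcop ha hb.le (mul_pos hc hm).le
      (Int.natCast_nonneg x) (Int.natCast_nonneg z) (Int.natCast_nonneg w) h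
  refine ⟨hsystem, fun β ⟨_, hfrob⟩ => ?_⟩
  have hirr : Irrational (Real.sqrt m) := (irrational_sqrt_intCast_iff_of_nonneg hm.le).mpr hsq
  set k := β.natAbs
  set q := (a - 1) * (b + c) + a * k - β
  have hq : 0 ≤ q := by nlinarith [Int.le_natAbs (a := β), Int.natCast_nonneg k]
  have hmem := hfrob (q.toNat * Real.sqrt m) ⟨0, q.toNat, by simp⟩
  rw [add_assoc, ← add_mul, ← Int.cast_natCast, Int.toNat_of_nonneg hq, ← Int.cast_add] at hmem
  obtain ⟨x, y, z, w, h₁, h₂⟩ := exists_nat_of_inSG hm.le hirr hmem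
  exact hsystem k ⟨x, y, z, w, h₁, by rw [h₂]; ring⟩
end

section
/- Suppose gcd(a, b² - c²m) = 1. Then Frob(a, b+c√m) = (a-1)(b+c√m-1)(1+√m) + ℕ[√m]; that is, w ∈ ℤ[√m] satisfies w + ℕ[√m] ⊆ SG(a, b+c√m) if and only if w - (a-1)(b+c√m-1)(1+√m) ∈ ℕ[√m]. -/
/-- Integer version of membership in `SG(a, b + c√m)` in coordinates. -/
def Sint (m a b c x y : ℤ) : Prop :=
  ∃ p₁ q₁ p₂ q₂ : ℤ, 0 ≤ p₁ ∧ 0 ≤ q₁ ∧ 0 ≤ p₂ ∧ 0 ≤ q₂ ∧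
    x = a*p₁ + b*p₂ + c*m*q₂ ∧ y = a*q₁ + c*p₂ + b*q₂

lemma sqrt_unique {m : ℤ} (hirr : Irrational (Real.sqrt m))
    {p q p' q' : ℤ} (h : (p:ℝ) + q * Real.sqrt m = p' + q' * Real.sqrt m) :
    p = p' ∧ q = q' := by
  by_cases hq : q = q'
  · subst hq
    constructor
    · exact_mod_cast (by linarith : (p:ℝ) = p')
    · rfl
  · exfalso
    have hq' : ((q:ℝ) - q') ≠ 0 := by
      intro h0
      exact hq (by exact_mod_cast (by linarith : (q:ℝ) = q'))
    have hs : Real.sqrt m = ((p' - p : ℤ) : ℝ) / ((q - q' : ℤ) : ℝ) := by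
      push_cast
      field_simp
      linarith
    apply hirr
    refine ⟨((p' - p : ℤ) : ℚ) / ((q - q' : ℤ) : ℚ), ?_⟩
    rw [hs]; push_cast; ring

lemma mem_of_ge (m a b c : ℤ) (hm : 0 < m) (ha : 0 < a) (hb : 0 < b) (hc : 0 < c)
    (hgcd : Int.gcd a (b ^ 2 - c ^ 2 * m) = 1) (x y : ℤ)
    (hx : (a-1)*(b+c*m-1) ≤ x) (hy : (a-1)*(b+c-1) ≤ y) :
    Sint m a b c x y := by
  obtain ⟨u, v, huv⟩ := (Int.isCoprime_iff_gcd_eq_one.mpr hgcd)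
  -- huv : u * a + v * (b^2 - c^2*m) = 1
  set t₁ := v * (b*x - c*m*y) with ht₁
  set t₂ := v * (b*y - c*x) with ht₂
  set p₀ := t₁ % a with hp₀
  set q₀ := t₂ % a with hq₀
  have ha' : a ≠ 0 := ne_of_gt ha
  have hp₀0 : 0 ≤ p₀ := Int.emod_nonneg _ ha'
  have hq₀0 : 0 ≤ q₀ := Int.emod_nonneg _ ha'
  have hp₀a : p₀ ≤ a - 1 := by have := Int.emod_lt_of_pos t₁ ha; omega
  have hq₀a : q₀ ≤ a - 1 := by have := Int.emod_lt_of_pos t₂ ha; omega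
  have hdx : x - (b*p₀ + c*m*q₀) = a * (x*u + b*(t₁/a) + c*m*(t₂/a)) := by
    rw [hp₀, hq₀, Int.emod_def, Int.emod_def]
    linear_combination (-x) * huv
  have hdy : y - (c*p₀ + b*q₀) = a * (y*u + c*(t₁/a) + b*(t₂/a)) := by
    rw [hp₀, hq₀, Int.emod_def, Int.emod_def]
    linear_combination (-y) * huv
  have hbx : b*p₀ + c*m*q₀ ≤ x := by
    by_contra hlt
    push_neg at hlt
    have h1 : b*p₀ + c*m*q₀ ≤ (a-1)*(b+c*m) := by
      nlinarith [mul_le_mul_of_nonneg_left hp₀a hb.le,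
        mul_le_mul_of_nonneg_left hq₀a (mul_nonneg hc.le hm.le)]
    have h2 : 0 < (b*p₀ + c*m*q₀) - x := by omega
    have h3 : a ∣ (b*p₀ + c*m*q₀) - x := ⟨-(x*u + b*(t₁/a) + c*m*(t₂/a)), by linear_combination -hdx⟩
    have h4 : a ≤ (b*p₀ + c*m*q₀) - x := Int.le_of_dvd h2 h3
    nlinarith
  have hby : c*p₀ + b*q₀ ≤ y := by
    by_contra hlt
    push_neg at hlt
    have h1 : c*p₀ + b*q₀ ≤ (a-1)*(c+b) := by
      nlinarith [mul_le_mul_of_nonneg_left hp₀a hc.le,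
        mul_le_mul_of_nonneg_left hq₀a hb.le]
    have h2 : 0 < (c*p₀ + b*q₀) - y := by omega
    have h3 : a ∣ (c*p₀ + b*q₀) - y := ⟨-(y*u + c*(t₁/a) + b*(t₂/a)), by linear_combination -hdy⟩
    have h4 : a ≤ (c*p₀ + b*q₀) - y := Int.le_of_dvd h2 h3
    nlinarith
  refine ⟨x*u + b*(t₁/a) + c*m*(t₂/a), y*u + c*(t₁/a) + b*(t₂/a), p₀, q₀, ?_, ?_, hp₀0, hq₀0, ?_, ?_⟩
  · by_contra hneg
    push_neg at hneg
    have hmn : a * (x*u + b*(t₁/a) + c*m*(t₂/a)) < 0 := mul_neg_of_pos_of_neg ha hneg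
    linarith [hdx]
  · by_contra hneg
    push_neg at hneg
    have hmn : a * (y*u + c*(t₁/a) + b*(t₂/a)) < 0 := mul_neg_of_pos_of_neg ha hneg
    linarith [hdy]
  · linear_combination hdx
  · linear_combination hdy

lemma not_mem_x (m a b c : ℤ) (hm : 0 < m) (ha : 0 < a) (hb : 0 < b) (hc : 0 < c)
    (hgcd : Int.gcd a (b ^ 2 - c ^ 2 * m) = 1) (X Y : ℤ)
    (hX : a ∣ X + (b + c*m)) (hY : a ∣ Y + (c + b)) (hXlt : X < (a-1)*(b+c*m)) :
    ¬ Sint m a b c X Y := by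
  rintro ⟨p₁, q₁, p₂, q₂, hp₁, hq₁, hp₂, hq₂, hXe, hYe⟩
  have hco : IsCoprime a (b^2 - c^2*m) := Int.isCoprime_iff_gcd_eq_one.mpr hgcd
  have h1 : a ∣ b*(p₂+1) + c*m*(q₂+1) := by
    obtain ⟨k, hk⟩ := hX
    exact ⟨k - p₁, by linear_combination hk - hXe⟩
  have h2 : a ∣ c*(p₂+1) + b*(q₂+1) := by
    obtain ⟨k, hk⟩ := hY
    exact ⟨k - q₁, by linear_combination hk - hYe⟩
  have hdp : a ∣ (p₂+1) * (b^2 - c^2*m) := by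
    obtain ⟨k1, hk1⟩ := h1
    obtain ⟨k2, hk2⟩ := h2
    exact ⟨b*k1 - c*m*k2, by linear_combination b*hk1 - (c*m)*hk2⟩
  have hdq : a ∣ (q₂+1) * (b^2 - c^2*m) := by
    obtain ⟨k1, hk1⟩ := h1
    obtain ⟨k2, hk2⟩ := h2
    exact ⟨b*k2 - c*k1, by linear_combination b*hk2 - c*hk1⟩
  have hap : a ∣ p₂ + 1 := hco.dvd_of_dvd_mul_right hdp
  have haq : a ∣ q₂ + 1 := hco.dvd_of_dvd_mul_right hdq
  have hp : a - 1 ≤ p₂ := by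
    have := Int.le_of_dvd (by omega) hap; omega
  have hq : a - 1 ≤ q₂ := by
    have := Int.le_of_dvd (by omega) haq; omega
  have hbd : (a-1)*(b+c*m) ≤ b*p₂ + c*m*q₂ := by
    nlinarith [mul_le_mul_of_nonneg_left hp hb.le,
      mul_le_mul_of_nonneg_left hq (mul_nonneg hc.le hm.le)]
  have hap1 : 0 ≤ a * p₁ := mul_nonneg ha.le hp₁
  linarith [hXe, hbd, hap1]

lemma not_mem_y (m a b c : ℤ) (hm : 0 < m) (ha : 0 < a) (hb : 0 < b) (hc : 0 < c)
    (hgcd : Int.gcd a (b ^ 2 - c ^ 2 * m) = 1) (X Y : ℤ)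
    (hX : a ∣ X + (b + c*m)) (hY : a ∣ Y + (c + b)) (hYlt : Y < (a-1)*(c+b)) :
    ¬ Sint m a b c X Y := by
  rintro ⟨p₁, q₁, p₂, q₂, hp₁, hq₁, hp₂, hq₂, hXe, hYe⟩
  have hco : IsCoprime a (b^2 - c^2*m) := Int.isCoprime_iff_gcd_eq_one.mpr hgcd
  have h1 : a ∣ b*(p₂+1) + c*m*(q₂+1) := by
    obtain ⟨k, hk⟩ := hX
    exact ⟨k - p₁, by linear_combination hk - hXe⟩
  have h2 : a ∣ c*(p₂+1) + b*(q₂+1) := by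
    obtain ⟨k, hk⟩ := hY
    exact ⟨k - q₁, by linear_combination hk - hYe⟩
  have hdp : a ∣ (p₂+1) * (b^2 - c^2*m) := by
    obtain ⟨k1, hk1⟩ := h1
    obtain ⟨k2, hk2⟩ := h2
    exact ⟨b*k1 - c*m*k2, by linear_combination b*hk1 - (c*m)*hk2⟩
  have hdq : a ∣ (q₂+1) * (b^2 - c^2*m) := by
    obtain ⟨k1, hk1⟩ := h1
    obtain ⟨k2, hk2⟩ := h2
    exact ⟨b*k2 - c*k1, by linear_combination b*hk2 - c*hk1⟩
  have hap : a ∣ p₂ + 1 := hco.dvd_of_dvd_mul_right hdp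
  have haq : a ∣ q₂ + 1 := hco.dvd_of_dvd_mul_right hdq
  have hp : a - 1 ≤ p₂ := by
    have := Int.le_of_dvd (by omega) hap; omega
  have hq : a - 1 ≤ q₂ := by
    have := Int.le_of_dvd (by omega) haq; omega
  have hbd : (a-1)*(c+b) ≤ c*p₂ + b*q₂ := by
    nlinarith [mul_le_mul_of_nonneg_left hp hc.le,
      mul_le_mul_of_nonneg_left hq hb.le]
  have hap1 : 0 ≤ a * q₁ := mul_nonneg ha.le hq₁
  linarith [hYe, hbd, hap1]

lemma Sint_frob (m a b c : ℤ) (hm : 0 < m) (ha : 0 < a) (hb : 0 < b) (hc : 0 < c)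
    (hgcd : Int.gcd a (b ^ 2 - c ^ 2 * m) = 1) (x y : ℤ) :
    (∀ n₁ n₂ : ℤ, 0 ≤ n₁ → 0 ≤ n₂ → Sint m a b c (x+n₁) (y+n₂)) ↔
      ((a-1)*(b+c*m-1) ≤ x ∧ (a-1)*(b+c-1) ≤ y) := by
  constructor
  · intro h
    have ha' : a ≠ 0 := ne_of_gt ha
    constructor
    · by_contra hlt
      push_neg at hlt
      set r := (-(b + c*m) - x) % a with hr
      set s := (-(c + b) - y) % a with hs
      have hr0 : 0 ≤ r := Int.emod_nonneg _ ha'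
      have hra : r < a := Int.emod_lt_of_pos _ ha
      have hs0 : 0 ≤ s := Int.emod_nonneg _ ha'
      have hX : a ∣ (x + r) + (b + c*m) := by
        have := Int.emod_emod_of_dvd (-(b + c*m) - x) (dvd_refl a)
        have hd : a ∣ (-(b + c*m) - x) - r := Int.dvd_self_sub_of_emod_eq rfl
        obtain ⟨k, hk⟩ := hd
        exact ⟨-k, by linarith⟩
      have hY : a ∣ (y + s) + (c + b) := by
        have hd : a ∣ (-(c + b) - y) - s := Int.dvd_self_sub_of_emod_eq rfl
        obtain ⟨k, hk⟩ := hd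
        exact ⟨-k, by linarith⟩
      have hXlt : x + r < (a-1)*(b+c*m) := by nlinarith
      exact not_mem_x m a b c hm ha hb hc hgcd (x+r) (y+s) hX hY hXlt (h r s hr0 hs0)
    · by_contra hlt
      push_neg at hlt
      set r := (-(b + c*m) - x) % a with hr
      set s := (-(c + b) - y) % a with hs
      have hr0 : 0 ≤ r := Int.emod_nonneg _ ha'
      have hs0 : 0 ≤ s := Int.emod_nonneg _ ha'
      have hsa : s < a := Int.emod_lt_of_pos _ ha
      have hX : a ∣ (x + r) + (b + c*m) := by
        have hd : a ∣ (-(b + c*m) - x) - r := Int.dvd_self_sub_of_emod_eq rfl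
        obtain ⟨k, hk⟩ := hd
        exact ⟨-k, by linarith⟩
      have hY : a ∣ (y + s) + (c + b) := by
        have hd : a ∣ (-(c + b) - y) - s := Int.dvd_self_sub_of_emod_eq rfl
        obtain ⟨k, hk⟩ := hd
        exact ⟨-k, by linarith⟩
      have hYlt : y + s < (a-1)*(c+b) := by nlinarith
      exact not_mem_y m a b c hm ha hb hc hgcd (x+r) (y+s) hX hY hYlt (h r s hr0 hs0)
  · rintro ⟨h1, h2⟩ n₁ n₂ hn₁ hn₂
    exact mem_of_ge m a b c hm ha hb hc hgcd _ _ (by linarith) (by linarith)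

lemma inSG_iff (m a b c : ℤ) (hm : 0 < m) (hirr : Irrational (Real.sqrt m)) (X Y : ℤ) :
    inSG m (a : ℝ) ((b : ℝ) + c * Real.sqrt m) ((X : ℝ) + (Y : ℝ) * Real.sqrt m) ↔
      Sint m a b c X Y := by
  have hs2 : Real.sqrt m * Real.sqrt m = (m : ℝ) :=
    Real.mul_self_sqrt (by exact_mod_cast hm.le)
  constructor
  · rintro ⟨l₁, l₂, ⟨p₁, q₁, rfl⟩, ⟨p₂, q₂, rfl⟩, hx⟩
    have hx' : (X : ℝ) + (Y : ℝ) * Real.sqrt m =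
        ((a*p₁ + b*p₂ + c*m*q₂ : ℤ) : ℝ) + ((a*q₁ + c*p₂ + b*q₂ : ℤ) : ℝ) * Real.sqrt m := by
      rw [hx]
      push_cast
      linear_combination ((q₂ : ℝ) * c) * hs2
    obtain ⟨h1, h2⟩ := sqrt_unique hirr hx'
    exact ⟨p₁, q₁, p₂, q₂, Int.ofNat_nonneg p₁, Int.ofNat_nonneg q₁,
      Int.ofNat_nonneg p₂, Int.ofNat_nonneg q₂, h1, h2⟩
  · rintro ⟨p₁, q₁, p₂, q₂, hp₁, hq₁, hp₂, hq₂, hXe, hYe⟩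
    refine ⟨(p₁.toNat : ℝ) + (q₁.toNat : ℝ) * Real.sqrt m,
      (p₂.toNat : ℝ) + (q₂.toNat : ℝ) * Real.sqrt m,
      ⟨p₁.toNat, q₁.toNat, rfl⟩, ⟨p₂.toNat, q₂.toNat, rfl⟩, ?_⟩
    have e1 : ((p₁.toNat : ℕ) : ℝ) = (p₁ : ℝ) := by
      rw [← Int.cast_natCast, Int.toNat_of_nonneg hp₁]
    have e2 : ((q₁.toNat : ℕ) : ℝ) = (q₁ : ℝ) := by
      rw [← Int.cast_natCast, Int.toNat_of_nonneg hq₁]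
    have e3 : ((p₂.toNat : ℕ) : ℝ) = (p₂ : ℝ) := by
      rw [← Int.cast_natCast, Int.toNat_of_nonneg hp₂]
    have e4 : ((q₂.toNat : ℕ) : ℝ) = (q₂ : ℝ) := by
      rw [← Int.cast_natCast, Int.toNat_of_nonneg hq₂]
    have hXr : (X : ℝ) = a*p₁ + b*p₂ + c*m*q₂ := by exact_mod_cast congrArg (fun z : ℤ => (z : ℝ)) hXe
    have hYr : (Y : ℝ) = a*q₁ + c*p₂ + b*q₂ := by exact_mod_cast congrArg (fun z : ℤ => (z : ℝ)) hYe
    rw [e1, e2, e3, e4, hXr, hYr]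
    linear_combination (-(q₂ : ℝ) * c) * hs2

theorem stmt_9 (m a b c : ℤ) (hm : 0 < m) (hsq : ¬ IsSquare m)
    (ha : 0 < a) (hb : 0 < b) (hc : 0 < c)
    (hgcd : Int.gcd a (b ^ 2 - c ^ 2 * m) = 1) :
    ∀ w : ℝ, inZsqrt m w →
      (inFrob m (a : ℝ) ((b : ℝ) + c * Real.sqrt m) w ↔
        inNsqrt m (w - ((a : ℝ) - 1) * ((b : ℝ) + c * Real.sqrt m - 1)
          * (1 + Real.sqrt m))) := by
  have hirr : Irrational (Real.sqrt m) :=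
    (irrational_sqrt_intCast_iff_of_nonneg hm.le).mpr hsq
  have hs2 : Real.sqrt m * Real.sqrt m = (m : ℝ) :=
    Real.mul_self_sqrt (by exact_mod_cast hm.le)
  rintro w ⟨wx, wy, rfl⟩
  set F₁ : ℤ := (a-1)*(b+c*m-1) with hF₁
  set F₂ : ℤ := (a-1)*(b+c-1) with hF₂
  have hF : ((a : ℝ) - 1) * ((b : ℝ) + c * Real.sqrt m - 1) * (1 + Real.sqrt m)
      = (F₁ : ℝ) + (F₂ : ℝ) * Real.sqrt m := by
    rw [hF₁, hF₂]
    push_cast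
    linear_combination (((a:ℝ)-1) * c) * hs2
  constructor
  · rintro ⟨_, hfrob⟩
    have key : ∀ n₁ n₂ : ℤ, 0 ≤ n₁ → 0 ≤ n₂ → Sint m a b c (wx+n₁) (wy+n₂) := by
      intro n₁ n₂ hn₁ hn₂
      have hn : inNsqrt m ((n₁ : ℝ) + (n₂ : ℝ) * Real.sqrt m) :=
        ⟨n₁.toNat, n₂.toNat, by
          have f1 : ((n₁.toNat : ℕ) : ℝ) = (n₁ : ℝ) := by
            rw [← Int.cast_natCast, Int.toNat_of_nonneg hn₁]
          have f2 : ((n₂.toNat : ℕ) : ℝ) = (n₂ : ℝ) := by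
            rw [← Int.cast_natCast, Int.toNat_of_nonneg hn₂]
          rw [f1, f2]⟩
      have := hfrob _ hn
      have heq : ((wx:ℝ) + wy * Real.sqrt m) + ((n₁ : ℝ) + (n₂ : ℝ) * Real.sqrt m)
          = ((wx + n₁ : ℤ) : ℝ) + ((wy + n₂ : ℤ) : ℝ) * Real.sqrt m := by push_cast; ring
      rw [heq] at this
      exact (inSG_iff m a b c hm hirr _ _).mp this
    obtain ⟨h1, h2⟩ := (Sint_frob m a b c hm ha hb hc hgcd wx wy).mp key
    refine ⟨(wx - F₁).toNat, (wy - F₂).toNat, ?_⟩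
    rw [hF]
    have E1 : (((wx - F₁).toNat : ℕ) : ℝ) = ((wx : ℝ) - (F₁ : ℝ)) := by
      rw [← Int.cast_natCast, Int.toNat_of_nonneg (by omega : (0:ℤ) ≤ wx - F₁)]
      push_cast; ring
    have E2 : (((wy - F₂).toNat : ℕ) : ℝ) = ((wy : ℝ) - (F₂ : ℝ)) := by
      rw [← Int.cast_natCast, Int.toNat_of_nonneg (by omega : (0:ℤ) ≤ wy - F₂)]
      push_cast; ring
    rw [E1, E2]
    ring
  · rintro ⟨p, q, hpq⟩
    rw [hF] at hpq
    have hpq' : ((wx - F₁ : ℤ) : ℝ) + ((wy - F₂ : ℤ) : ℝ) * Real.sqrt m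
        = ((p : ℤ) : ℝ) + ((q : ℤ) : ℝ) * Real.sqrt m := by push_cast; linarith [hpq]
    obtain ⟨e1, e2⟩ := sqrt_unique hirr hpq'
    have h1 : F₁ ≤ wx := by omega
    have h2 : F₂ ≤ wy := by omega
    refine ⟨⟨wx, wy, rfl⟩, ?_⟩
    rintro n ⟨n₁, n₂, rfl⟩
    have heq : ((wx:ℝ) + wy * Real.sqrt m) + ((n₁ : ℝ) + (n₂ : ℝ) * Real.sqrt m)
        = ((wx + n₁ : ℤ) : ℝ) + ((wy + n₂ : ℤ) : ℝ) * Real.sqrt m := by push_cast; ring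
    rw [heq]
    exact (inSG_iff m a b c hm hirr _ _).mpr
      (mem_of_ge m a b c hm ha hb hc hgcd _ _
        (by have := Int.ofNat_nonneg n₁; omega) (by have := Int.ofNat_nonneg n₂; omega))
end

section
/- For positive integers a, b, c and a positive integer m not a perfect square, the pair (a√m, b+c√m) generates the unit ideal in ℤ[√m] if and only if gcd(am, b² - c²m) = 1. -/
namespace Zsqrtd

variable {d a b c : ℤ}

/-- Taking norms in `(b + c√d) y = 1 - a√d x` gives
`N(b + c√d) N(y) = 1 - Tr(a√d x) + N(a√d) N(x)`, and both the trace and the norm of `a√d x`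
are multiples of `a d`. -/
theorem isCoprime_of_mul_add_mul_eq_one {x y : ℤ√d} (h : ⟨0, a⟩ * x + ⟨b, c⟩ * y = 1) :
    IsCoprime (a * d) (b ^ 2 - c ^ 2 * d) := by
  have hnorm := congrArg norm (eq_sub_of_add_eq' h)
  rw [norm_mul] at hnorm
  simp only [norm_def, re_sub, im_sub, re_mul, im_mul, re_one, im_one] at hnorm
  exact ⟨2 * x.im + a * x.re ^ 2 - a * d * x.im ^ 2, y.norm, by
    rw [norm_def]; linear_combination hnorm⟩

theorem exists_mul_add_mul_eq_one_of_isCoprime (h : IsCoprime (a * d) (b ^ 2 - c ^ 2 * d)) :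
    ∃ x y : ℤ√d, ⟨0, a⟩ * x + ⟨b, c⟩ * y = 1 := by
  obtain ⟨u, v, huv⟩ := h
  refine ⟨⟨0, u⟩, ⟨v * b, -(v * c)⟩, ?_⟩
  ext
  · simp only [re_mul, re_add, re_one]
    linear_combination huv
  · simp only [im_mul, im_add, im_one]
    ring

theorem exists_mul_add_mul_eq_one_iff :
    (∃ x y : ℤ√d, ⟨0, a⟩ * x + ⟨b, c⟩ * y = 1) ↔ IsCoprime (a * d) (b ^ 2 - c ^ 2 * d) :=
  ⟨fun ⟨_, _, h⟩ => isCoprime_of_mul_add_mul_eq_one h, exists_mul_add_mul_eq_one_of_isCoprime⟩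

end Zsqrtd

theorem stmt_10_general (m a b c : ℤ) (hm : 0 < m) (hsq : ¬ IsSquare m) :
    (∃ x y : ℝ, inZsqrt m x ∧ inZsqrt m y ∧
        (a : ℝ) * Real.sqrt m * x + ((b : ℝ) + c * Real.sqrt m) * y = 1) ↔
      Int.gcd (a * m) (b ^ 2 - c ^ 2 * m) = 1 := by
  have hsqrt : √(m : ℝ) * √m = m := Real.mul_self_sqrt (by positivity)
  set φ : ℤ√m →+* ℝ := Zsqrtd.lift ⟨√(m : ℝ), hsqrt⟩
  have hφ_apply (z : ℤ√m) : φ z = z.re + z.im * √m := rfl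
  have hφ : Function.Injective φ := Zsqrtd.lift_injective _ fun n h => hsq ⟨n, h⟩
  rw [← Int.isCoprime_iff_gcd_eq_one, ← Zsqrtd.exists_mul_add_mul_eq_one_iff]
  constructor
  · rintro ⟨_, _, ⟨p, q, rfl⟩, ⟨r, s, rfl⟩, h⟩
    refine ⟨⟨p, q⟩, ⟨r, s⟩, hφ ?_⟩
    rw [map_add, map_mul, map_mul, map_one]
    simp only [hφ_apply]
    push_cast
    linear_combination h
  · rintro ⟨x, y, h⟩
    refine ⟨φ x, φ y, ⟨x.re, x.im, rfl⟩, ⟨y.re, y.im, rfl⟩, ?_⟩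
    have hφh := congrArg φ h
    rw [map_add, map_mul, map_mul, map_one] at hφh
    simpa only [hφ_apply, Int.cast_zero, zero_add] using hφh

theorem stmt_10 (m a b c : ℤ) (hm : 0 < m) (hsq : ¬ IsSquare m)
    (ha : 0 < a) (hb : 0 < b) (hc : 0 < c) :
    (∃ x y : ℝ, inZsqrt m x ∧ inZsqrt m y ∧
        (a : ℝ) * Real.sqrt m * x + ((b : ℝ) + c * Real.sqrt m) * y = 1) ↔
      Int.gcd (a * m) (b ^ 2 - c ^ 2 * m) = 1 :=
  stmt_10_general m a b c hm hsq
end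

section
/- If gcd(am, b² - c²m) = 1, then for every A + B√m ∈ ℤ[√m] the equation a√m·x + (b+c√m)y = A + B√m has a solution with x, y ∈ ℤ[√m]. -/
theorem stmt_11 (m a b c : ℤ) (hm : 0 < m) (hsq : ¬ IsSquare m)
    (ha : 0 < a) (hb : 0 < b) (hc : 0 < c)
    (hgcd : Int.gcd (a * m) (b ^ 2 - c ^ 2 * m) = 1) :
    ∀ A B : ℤ, ∃ x y : ℝ, inZsqrt m x ∧ inZsqrt m y ∧
      (a : ℝ) * Real.sqrt m * x + ((b : ℝ) + c * Real.sqrt m) * y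
        = (A : ℝ) + B * Real.sqrt m := by
  intro A B
  set u := Int.gcdA (a * m) (b ^ 2 - c ^ 2 * m) with hu
  set v := Int.gcdB (a * m) (b ^ 2 - c ^ 2 * m) with hv
  have h1 : (a * m) * u + (b ^ 2 - c ^ 2 * m) * v = 1 := by
    have := Int.gcd_eq_gcd_ab (a * m) (b ^ 2 - c ^ 2 * m)
    rw [hgcd] at this
    push_cast at this
    linarith
  have h1' : ((a : ℝ) * m) * u + ((b : ℝ) ^ 2 - c ^ 2 * m) * v = 1 := by
    exact_mod_cast congrArg (Int.cast : ℤ → ℝ) h1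
  have hs : Real.sqrt m * Real.sqrt m = (m : ℝ) :=
    Real.mul_self_sqrt (by exact_mod_cast hm.le)
  refine ⟨(u * B * m : ℤ) + (u * A : ℤ) * Real.sqrt m,
          (v * (b * A - c * B * m) : ℤ) + (v * (b * B - c * A) : ℤ) * Real.sqrt m,
          ⟨_, _, rfl⟩, ⟨_, _, rfl⟩, ?_⟩
  push_cast
  linear_combination ((A : ℝ) + B * Real.sqrt m) * h1' +
    ((a : ℝ) * u * A + c * v * (b * B - c * A)) * hs
end

section
/- Suppose gcd(am, b² - c²m) = 1. If (x₀, y₀, z₀, w₀) and (x', y', z', w') in ℤ⁴ both satisfy amy + bz + cmw = A and ax + cz + bw = B, then am divides z₀ - z' and a divides w₀ - w'. -/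
theorem stmt_12 (m a b c : ℤ) (hm : 0 < m) (hsq : ¬ IsSquare m)
    (ha : 0 < a) (hb : 0 < b) (hc : 0 < c)
    (hgcd : Int.gcd (a * m) (b ^ 2 - c ^ 2 * m) = 1)
    (A B x₀ y₀ z₀ w₀ x' y' z' w' : ℤ)
    (h1 : a * m * y₀ + b * z₀ + c * m * w₀ = A)
    (h2 : a * x₀ + c * z₀ + b * w₀ = B)
    (h1' : a * m * y' + b * z' + c * m * w' = A)
    (h2' : a * x' + c * z' + b * w' = B) :
    a * m ∣ z₀ - z' ∧ a ∣ w₀ - w' := by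
  have hd1 : a * m ∣ b * (z₀ - z') + c * m * (w₀ - w') := by
    refine ⟨y' - y₀, by linarith⟩
  have hd2 : a ∣ c * (z₀ - z') + b * (w₀ - w') := by
    refine ⟨x' - x₀, by linarith⟩
  have cop : IsCoprime (a * m) (b ^ 2 - c ^ 2 * m) := by
    rw [Int.isCoprime_iff_gcd_eq_one]; exact hgcd
  constructor
  · have h : a * m ∣ (b ^ 2 - c ^ 2 * m) * (z₀ - z') := by
      have : (b ^ 2 - c ^ 2 * m) * (z₀ - z') =
          b * (b * (z₀ - z') + c * m * (w₀ - w')) -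
          m * c * (c * (z₀ - z') + b * (w₀ - w')) := by ring
      rw [this]
      exact dvd_sub (Dvd.dvd.mul_left hd1 b)
        (by obtain ⟨k, hk⟩ := hd2; exact ⟨c * k, by rw [hk]; ring⟩)
    exact (cop.dvd_of_dvd_mul_left h)
  · have copa : IsCoprime a (b ^ 2 - c ^ 2 * m) := cop.of_mul_left_left
    have hd1' : a ∣ b * (z₀ - z') + c * m * (w₀ - w') :=
      dvd_trans (dvd_mul_right a m) hd1
    have h : a ∣ (b ^ 2 - c ^ 2 * m) * (w₀ - w') := by
      have : (b ^ 2 - c ^ 2 * m) * (w₀ - w') =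
          b * (c * (z₀ - z') + b * (w₀ - w')) -
          c * (b * (z₀ - z') + c * m * (w₀ - w')) := by ring
      rw [this]
      exact dvd_sub (Dvd.dvd.mul_left hd2 b) (Dvd.dvd.mul_left hd1' c)
    exact copa.dvd_of_dvd_mul_left h
end

section
/- Suppose gcd(am, b² - c²m) = 1. Then there exists a unique quadruple (x, y, z, w) ∈ ℤ⁴ with 0 ≤ z < am and 0 ≤ w < a satisfying amy + bz + cmw = A and ax + cz + bw = B. -/
theorem stmt_15 (m a b c : ℤ) (hm : 0 < m) (hsq : ¬ IsSquare m)
    (ha : 0 < a) (hb : 0 < b) (hc : 0 < c)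
    (hgcd : Int.gcd (a * m) (b ^ 2 - c ^ 2 * m) = 1) (A B : ℤ) :
    ∃! s : ℤ × ℤ × ℤ × ℤ,
      0 ≤ s.2.2.1 ∧ s.2.2.1 < a * m ∧ 0 ≤ s.2.2.2 ∧ s.2.2.2 < a ∧
      a * m * s.2.1 + b * s.2.2.1 + c * m * s.2.2.2 = A ∧
      a * s.1 + c * s.2.2.1 + b * s.2.2.2 = B := by
  have hM : (0:ℤ) < a * m := mul_pos ha hm
  have hMne : (a*m) ≠ 0 := ne_of_gt hM
  have hane : a ≠ 0 := ne_of_gt ha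
  have hco : IsCoprime (a * m) (b ^ 2 - c ^ 2 * m) :=
    Int.isCoprime_iff_gcd_eq_one.mpr hgcd
  obtain ⟨u, v, huv⟩ := hco
  set z0 : ℤ := (v * (b * A - c * m * B)) % (a * m) with hz0def
  set w0 : ℤ := (v * (b * B - c * A)) % a with hw0def
  have hz0nn : 0 ≤ z0 := Int.emod_nonneg _ hMne
  have hz0lt : z0 < a * m := Int.emod_lt_of_pos _ hM
  have hw0nn : 0 ≤ w0 := Int.emod_nonneg _ hane
  have hw0lt : w0 < a := Int.emod_lt_of_pos _ ha
  have hp : v * (b * A - c * m * B) - z0 = (a*m) * ((v * (b * A - c * m * B)) / (a*m)) := by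
    have := Int.emod_add_mul_ediv (v * (b * A - c * m * B)) (a*m)
    linarith
  have hq : v * (b * B - c * A) - w0 = a * ((v * (b * B - c * A)) / a) := by
    have := Int.emod_add_mul_ediv (v * (b * B - c * A)) a
    linarith
  set p := (v * (b * A - c * m * B)) / (a*m)
  set q := (v * (b * B - c * A)) / a
  have hr : v * (b ^ 2 - c ^ 2 * m) - 1 = (a*m) * (-u) := by linear_combination huv
  have h1 : a*m ∣ b * z0 + c * m * w0 - A :=
    ⟨(-u) * A - b * p - c * q, by linear_combination (-b) * hp + (-(c*m)) * hq + A * hr⟩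
  have h2 : a ∣ c * z0 + b * w0 - B :=
    ⟨m * (-u) * B - c * m * p - b * q, by linear_combination (-c) * hp + (-b) * hq + B * hr⟩
  obtain ⟨k1, hk1⟩ := h1
  obtain ⟨k2, hk2⟩ := h2
  refine ⟨(-k2, -k1, z0, w0), ⟨hz0nn, hz0lt, hw0nn, hw0lt, by linear_combination hk1,
    by linear_combination hk2⟩, ?_⟩
  rintro ⟨x', y', z', w'⟩ ⟨hz'nn, hz'lt, hw'nn, hw'lt, he1, he2⟩
  simp only at hz'nn hz'lt hw'nn hw'lt he1 he2 ⊢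
  -- equations for our constructed solution
  have me1 : a * m * (-k1) + b * z0 + c * m * w0 = A := by linear_combination hk1
  have me2 : a * (-k2) + c * z0 + b * w0 = B := by linear_combination hk2
  have d1 : a*m ∣ b * (z' - z0) + c * m * (w' - w0) :=
    ⟨-(y' - (-k1)), by linear_combination he1 - me1⟩
  have d2 : a ∣ c * (z' - z0) + b * (w' - w0) :=
    ⟨-(x' - (-k2)), by linear_combination he2 - me2⟩
  obtain ⟨p1, hp1⟩ := d1
  obtain ⟨p2, hp2⟩ := d2
  have d3 : a*m ∣ (b ^ 2 - c ^ 2 * m) * (z' - z0) :=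
    ⟨b * p1 - c * p2, by linear_combination b * hp1 - (c*m) * hp2⟩
  have hcop : IsCoprime (a*m) (b ^ 2 - c ^ 2 * m) := ⟨u, v, huv⟩
  have dZ : a*m ∣ z' - z0 := hcop.dvd_of_dvd_mul_left d3
  have hZ : z' - z0 = 0 := by
    refine Int.eq_zero_of_abs_lt_dvd dZ ?_
    rw [abs_lt]; constructor <;> linarith
  have hz : z' = z0 := by linarith
  have h' : a * m ∣ (c * (w' - w0)) * m := ⟨p1, by linear_combination hp1 - b * hZ⟩
  obtain ⟨t, ht⟩ := h'
  have dcw : a ∣ c * (w' - w0) :=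
    ⟨t, mul_right_cancel₀ (ne_of_gt hm) (by linear_combination ht : (c * (w' - w0)) * m = (a * t) * m)⟩
  have dbw : a ∣ b * (w' - w0) := ⟨p2, by linear_combination hp2 - c * hZ⟩
  obtain ⟨q1, hq1⟩ := dcw
  obtain ⟨q2, hq2⟩ := dbw
  have d4 : a ∣ (b ^ 2 - c ^ 2 * m) * (w' - w0) :=
    ⟨b * q2 - c * m * q1, by linear_combination b * hq2 - (c*m) * hq1⟩
  have hcopa : IsCoprime a (b ^ 2 - c ^ 2 * m) := by
    have := hcop
    exact IsCoprime.of_mul_left_left this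
  have dW : a ∣ w' - w0 := hcopa.dvd_of_dvd_mul_left d4
  have hW : w' - w0 = 0 := by
    refine Int.eq_zero_of_abs_lt_dvd dW ?_
    rw [abs_lt]; constructor <;> linarith
  have hw : w' = w0 := by linarith
  have hy : y' = -k1 := by
    have h : a * m * y' = a * m * (-k1) := by
      rw [hz, hw] at he1; linarith [me1]
    exact mul_left_cancel₀ hMne h
  have hx : x' = -k2 := by
    have h : a * x' = a * (-k2) := by
      rw [hz, hw] at he2; linarith [me2]
    exact mul_left_cancel₀ hane h
  simp [hx, hy, hz, hw]
end

section
/- Suppose gcd(am, b² - c²m) = 1. If A ≥ abm + acm - am - cm - b + 1 and B ≥ acm + ab - a - b - c + 1, then there exist x, y, z, w ∈ ℕ with amy + bz + cmw = A and ax + cz + bw = B (equivalently, a√m(x+y√m) + (b+c√m)(z+w√m) = A + B√m has a solution in ℕ[√m]). -/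
theorem stmt_17 (m a b c : ℤ) (hm : 0 < m) (hsq : ¬ IsSquare m)
    (ha : 0 < a) (hb : 0 < b) (hc : 0 < c)
    (hgcd : Int.gcd (a * m) (b ^ 2 - c ^ 2 * m) = 1) (A B : ℤ)
    (hA : a * b * m + a * c * m - a * m - c * m - b + 1 ≤ A)
    (hB : a * c * m + a * b - a - b - c + 1 ≤ B) :
    ∃ x y z w : ℕ, a * m * y + b * z + c * m * w = A ∧ a * x + c * z + b * w = B := by
  obtain ⟨u, v, huv⟩ : IsCoprime (a * m) (b ^ 2 - c ^ 2 * m) :=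
    Int.isCoprime_iff_gcd_eq_one.mpr hgcd
  have hN : 0 < a * m := mul_pos ha hm
  set z0 : ℤ := v * (b * A - c * m * B) with hz0
  set w0 : ℤ := v * (b * B - c * A) with hw0
  set q1 : ℤ := z0 / (a * m) with hq1
  set q2 : ℤ := w0 / a with hq2
  set zz : ℤ := z0 % (a * m) with hzz
  set ww : ℤ := w0 % a with hww
  have hze : zz = z0 - a * m * q1 := Int.emod_def z0 (a * m)
  have hwe : ww = w0 - a * q2 := Int.emod_def w0 a
  have hzz0 : 0 ≤ zz := Int.emod_nonneg _ hN.ne'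
  have hzz1 : zz ≤ a * m - 1 := by have := Int.emod_lt_of_pos z0 hN; omega
  have hww0 : 0 ≤ ww := Int.emod_nonneg _ ha.ne'
  have hww1 : ww ≤ a - 1 := by have := Int.emod_lt_of_pos w0 ha; omega
  set yy : ℤ := A * u + b * q1 + c * q2 with hyy
  set xx : ℤ := B * u * m + c * m * q1 + b * q2 with hxx
  have eq1 : a * m * yy + b * zz + c * m * ww = A := by
    rw [hze, hwe, hyy, hz0, hw0]
    linear_combination A * huv
  have eq2 : a * xx + c * zz + b * ww = B := by
    rw [hze, hwe, hxx, hz0, hw0]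
    linear_combination B * huv
  have hbz : b * zz ≤ b * (a * m - 1) := mul_le_mul_of_nonneg_left hzz1 hb.le
  have hcw : c * m * ww ≤ c * m * (a - 1) := mul_le_mul_of_nonneg_left hww1 (by positivity)
  have hcz : c * zz ≤ c * (a * m - 1) := mul_le_mul_of_nonneg_left hzz1 hc.le
  have hbw : b * ww ≤ b * (a - 1) := mul_le_mul_of_nonneg_left hww1 hb.le
  have hy1 : 1 - a * m ≤ a * m * yy := by nlinarith
  have hx1 : 1 - a ≤ a * xx := by nlinarith
  have hy0 : 0 ≤ yy := by
    have h2 : 0 < a * m * (yy + 1) := by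
      have : a * m * (yy + 1) = a * m * yy + a * m := by ring
      linarith
    rcases mul_pos_iff.mp h2 with ⟨_, h⟩ | ⟨h, _⟩
    · linarith
    · linarith
  have hx0 : 0 ≤ xx := by
    have h2 : 0 < a * (xx + 1) := by
      have : a * (xx + 1) = a * xx + a := by ring
      linarith
    rcases mul_pos_iff.mp h2 with ⟨_, h⟩ | ⟨h, _⟩
    · linarith
    · linarith
  refine ⟨xx.toNat, yy.toNat, zz.toNat, ww.toNat, ?_, ?_⟩
  · rw [Int.toNat_of_nonneg hy0, Int.toNat_of_nonneg hzz0, Int.toNat_of_nonneg hww0]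
    exact eq1
  · rw [Int.toNat_of_nonneg hx0, Int.toNat_of_nonneg hzz0, Int.toNat_of_nonneg hww0]
    exact eq2
end

section
/- Suppose gcd(am, b² - c²m) = 1. Then Frob(a√m, b+c√m) = (a√m - 1)(b + c√m - 1)(1 + √m) + ℕ[√m]; that is, w ∈ ℤ[√m] satisfies w + ℕ[√m] ⊆ SG(a√m, b+c√m) if and only if w - (a√m - 1)(b + c√m - 1)(1 + √m) ∈ ℕ[√m]. -/
/-- Integer-coordinate version of membership in `SG(a√m, b+c√m)`. -/
def intS (m a b c p q : ℤ) : Prop :=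
  ∃ s t u v : ℤ, 0 ≤ s ∧ 0 ≤ t ∧ 0 ≤ u ∧ 0 ≤ v ∧
    p = a*m*t + b*u + c*m*v ∧ q = a*s + c*u + b*v

namespace Stmt18Aux

variable {m a b c : ℤ}

lemma solv (hm : 0 < m) (ha : 0 < a)
    (hgcd : Int.gcd (a * m) (b ^ 2 - c ^ 2 * m) = 1) (p q : ℤ) :
    ∃ u v : ℤ, 0 ≤ u ∧ u < a*m ∧ 0 ≤ v ∧ v < a ∧
      a*m ∣ p - (b*u + c*m*v) ∧ a ∣ q - (c*u + b*v) := by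
  have ham : 0 < a*m := mul_pos ha hm
  obtain ⟨X, e, h1⟩ : ∃ X e : ℤ, 1 = (a*m)*X + (b^2 - c^2*m)*e := by
    have h := Int.gcd_eq_gcd_ab (a*m) (b^2 - c^2*m)
    rw [hgcd] at h
    exact ⟨_, _, by exact_mod_cast h⟩
  set u' : ℤ := e * (b*p - c*m*q) with hu'
  set v' : ℤ := e * (b*q - c*p) with hv'
  have hk₁ := Int.mul_ediv_add_emod u' (a*m)
  have hk₂ := Int.mul_ediv_add_emod v' a
  refine ⟨u' % (a*m), v' % a, Int.emod_nonneg _ ham.ne', Int.emod_lt_of_pos _ ham,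
    Int.emod_nonneg _ ha.ne', Int.emod_lt_of_pos _ ha,
    ⟨p*X + b*(u'/(a*m)) + c*(v'/a), ?_⟩, ⟨q*m*X + c*m*(u'/(a*m)) + b*(v'/a), ?_⟩⟩
  · linear_combination p*h1 - b*hk₁ - c*m*hk₂
  · linear_combination q*h1 - c*hk₁ - b*hk₂

lemma inj (hm : 0 < m) (ha : 0 < a)
    (hgcd : Int.gcd (a * m) (b ^ 2 - c ^ 2 * m) = 1) (x y : ℤ)
    (h1 : a*m ∣ b*x + c*m*y) (h2 : a ∣ c*x + b*y) : (a*m ∣ x) ∧ (a ∣ y) := by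
  have hcop : IsCoprime (a*m) (b^2 - c^2*m) := Int.isCoprime_iff_gcd_eq_one.mpr hgcd
  have haD : IsCoprime a (b^2 - c^2*m) := IsCoprime.of_mul_left_left hcop
  have hmD : IsCoprime m (b^2 - c^2*m) := IsCoprime.of_mul_left_right hcop
  have hmb2 : IsCoprime m (b^2) := by
    have := hmD.add_mul_left_right (c^2)
    have h : b ^ 2 - c ^ 2 * m + m * c ^ 2 = b^2 := by ring
    rwa [h] at this
  have hmb : IsCoprime m b := (IsCoprime.pow_right_iff (by norm_num)).mp hmb2
  have h1' : a ∣ b*x + c*m*y := (dvd_mul_right a m).trans h1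
  have hx : a ∣ x := by
    refine haD.dvd_of_dvd_mul_left ?_
    have : (b^2 - c^2*m) * x = b*(b*x + c*m*y) - c*m*(c*x + b*y) := by ring
    rw [this]
    exact dvd_sub (h1'.mul_left b) (h2.mul_left (c*m))
  have hy : a ∣ y := by
    refine haD.dvd_of_dvd_mul_left ?_
    have : (b^2 - c^2*m) * y = b*(c*x + b*y) - c*(b*x + c*m*y) := by ring
    rw [this]
    exact dvd_sub (h2.mul_left b) (h1'.mul_left c)
  obtain ⟨x₁, rfl⟩ := hx
  obtain ⟨y₁, rfl⟩ := hy
  refine ⟨?_, Dvd.intro _ rfl⟩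
  have hmx : m ∣ b*x₁ + c*m*y₁ := by
    have hZ : a*m ∣ a*(b*x₁ + c*m*y₁) := by
      have h3 : a*(b*x₁ + c*m*y₁) = b*(a*x₁) + c*m*(a*y₁) := by ring
      rw [h3]; exact h1
    exact (mul_dvd_mul_iff_left ha.ne').mp hZ
  have hmx1 : m ∣ x₁ := by
    refine hmb.dvd_of_dvd_mul_left ?_
    have : b * x₁ = (b*x₁ + c*m*y₁) - m*(c*y₁) := by ring
    rw [this]
    exact dvd_sub hmx ⟨c*y₁, rfl⟩
  obtain ⟨x₂, rfl⟩ := hmx1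
  exact ⟨x₂, by ring⟩


lemma central (hm : 0 < m) (ha : 0 < a) (hb : 0 < b) (hc : 0 < c)
    (hgcd : Int.gcd (a * m) (b ^ 2 - c ^ 2 * m) = 1) (p q : ℤ) :
    (∀ n₁ n₂ : ℤ, 0 ≤ n₁ → 0 ≤ n₂ → intS m a b c (p+n₁) (q+n₂)) ↔
    (b*(a*m-1) + c*m*(a-1) - a*m + 1 ≤ p ∧ c*(a*m-1) + b*(a-1) - a + 1 ≤ q) := by
  have ham : 0 < a*m := mul_pos ha hm
  constructor
  · intro h
    obtain ⟨s, t, U, V, hs, ht, hU, hV, hP, hQ⟩ :=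
      h ((b*(a*m-1) + c*m*(a-1) - p) % (a*m)) ((c*(a*m-1) + b*(a-1) - q) % a)
        (Int.emod_nonneg _ ham.ne') (Int.emod_nonneg _ ha.ne')
    have e₁ := Int.mul_ediv_add_emod (b*(a*m-1) + c*m*(a-1) - p) (a*m)
    have e₂ := Int.mul_ediv_add_emod (c*(a*m-1) + b*(a-1) - q) a
    have hn₁lt : (b*(a*m-1) + c*m*(a-1) - p) % (a*m) < a*m := Int.emod_lt_of_pos _ ham
    have hn₂lt : (c*(a*m-1) + b*(a-1) - q) % a < a := Int.emod_lt_of_pos _ ha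
    have hd₁ : a*m ∣ b*(U - (a*m-1)) + c*m*(V - (a-1)) :=
      ⟨-t - (b*(a*m-1) + c*m*(a-1) - p)/(a*m), by linear_combination e₁ - hP⟩
    have hd₂ : a ∣ c*(U - (a*m-1)) + b*(V - (a-1)) :=
      ⟨-s - (c*(a*m-1) + b*(a-1) - q)/a, by linear_combination e₂ - hQ⟩
    obtain ⟨hdu, hdv⟩ := inj hm ha hgcd _ _ hd₁ hd₂
    have hUu : a*m - 1 ≤ U := by
      obtain ⟨k, hk⟩ := hdu
      have hk0 : 0 ≤ k := by
        by_contra hneg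
        push_neg at hneg
        have hk1 : k ≤ -1 := by omega
        have h2 : a*m*k ≤ a*m*(-1) := mul_le_mul_of_nonneg_left hk1 ham.le
        linarith
      have h3 : 0 ≤ a*m*k := mul_nonneg ham.le hk0
      linarith
    have hVv : a - 1 ≤ V := by
      obtain ⟨k, hk⟩ := hdv
      have hk0 : 0 ≤ k := by
        by_contra hneg
        push_neg at hneg
        have hk1 : k ≤ -1 := by omega
        have h2 : a*k ≤ a*(-1) := mul_le_mul_of_nonneg_left hk1 ha.le
        linarith
      have h3 : 0 ≤ a*k := mul_nonneg ha.le hk0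
      linarith
    constructor
    · linarith [mul_le_mul_of_nonneg_left hUu hb.le,
        mul_le_mul_of_nonneg_left hVv (mul_pos hc hm).le, mul_nonneg ham.le ht]
    · linarith [mul_le_mul_of_nonneg_left hUu hc.le,
        mul_le_mul_of_nonneg_left hVv hb.le, mul_nonneg ha.le hs]
  · rintro ⟨hp, hq⟩ n₁ n₂ hn₁ hn₂
    obtain ⟨u, v, hu0, hult, hv0, hvlt, hd₁, hd₂⟩ := solv hm ha hgcd (p+n₁) (q+n₂)
    obtain ⟨t, ht⟩ := hd₁
    obtain ⟨s, hs⟩ := hd₂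
    have hbu : b*u ≤ b*(a*m-1) := mul_le_mul_of_nonneg_left (by omega) hb.le
    have hcv : c*m*v ≤ c*m*(a-1) := mul_le_mul_of_nonneg_left (by omega) (mul_pos hc hm).le
    have hcu : c*u ≤ c*(a*m-1) := mul_le_mul_of_nonneg_left (by omega) hc.le
    have hbv : b*v ≤ b*(a-1) := mul_le_mul_of_nonneg_left (by omega) hb.le
    have ht0 : 0 ≤ t := by
      by_contra hlt
      push_neg at hlt
      have h1 : t ≤ -1 := by omega
      have h2 : a*m*t ≤ a*m*(-1) := mul_le_mul_of_nonneg_left h1 ham.le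
      linarith
    have hs0 : 0 ≤ s := by
      by_contra hlt
      push_neg at hlt
      have h1 : s ≤ -1 := by omega
      have h2 : a*s ≤ a*(-1) := mul_le_mul_of_nonneg_left h1 ha.le
      linarith
    exact ⟨s, t, u, v, hs0, ht0, hu0, hv0, by linarith, by linarith⟩


lemma coord_eq {m : ℤ} (hirr : Irrational (Real.sqrt m)) {p q p' q' : ℤ}
    (h : (p:ℝ) + q * Real.sqrt m = p' + q' * Real.sqrt m) : p = p' ∧ q = q' := by
  by_cases hq : q = q'
  · subst hq
    have h' : (p:ℝ) = p' := by linarith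
    exact ⟨by exact_mod_cast h', rfl⟩
  · exfalso
    have hne : ((q' - q : ℤ):ℝ) ≠ 0 := by
      intro h0
      exact hq (by exact_mod_cast sub_eq_zero.mp (by exact_mod_cast h0) |>.symm)
    have hval : Real.sqrt m = ((p - p' : ℤ):ℝ) / ((q' - q : ℤ):ℝ) := by
      rw [eq_div_iff hne]
      push_cast
      linarith
    exact hirr ⟨((p - p' : ℚ))/((q' - q : ℚ)), by rw [hval]; push_cast; ring⟩

lemma sg_iff {m a b c : ℤ} (hm : 0 < m) (hirr : Irrational (Real.sqrt m)) (p q : ℤ) :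
    inSG m ((a:ℝ) * Real.sqrt m) ((b:ℝ) + c * Real.sqrt m) ((p:ℝ) + q * Real.sqrt m)
      ↔ intS m a b c p q := by
  have hm0 : (0:ℝ) ≤ (m:ℝ) := by exact_mod_cast hm.le
  have hr : Real.sqrt m * Real.sqrt m = (m:ℝ) := Real.mul_self_sqrt hm0
  constructor
  · rintro ⟨l₁, l₂, ⟨s, t, hl₁⟩, ⟨u, v, hl₂⟩, hx⟩
    have key : (p:ℝ) + q * Real.sqrt m
        = ((a*m*t + b*u + c*m*v : ℤ):ℝ) + ((a*s + c*u + b*v : ℤ):ℝ) * Real.sqrt m := by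
      rw [hx, hl₁, hl₂]
      push_cast
      linear_combination ((a:ℝ)*t + (c:ℝ)*v) * hr
    obtain ⟨h1, h2⟩ := coord_eq hirr key
    exact ⟨s, t, u, v, Int.natCast_nonneg s, Int.natCast_nonneg t, Int.natCast_nonneg u,
      Int.natCast_nonneg v, h1, h2⟩
  · rintro ⟨s, t, u, v, hs, ht, hu, hv, hP, hQ⟩
    refine ⟨(s.toNat : ℝ) + t.toNat * Real.sqrt m, (u.toNat : ℝ) + v.toNat * Real.sqrt m,
      ⟨s.toNat, t.toNat, rfl⟩, ⟨u.toNat, v.toNat, rfl⟩, ?_⟩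
    have e1 : ((s.toNat : ℕ) : ℝ) = (s : ℝ) := by exact_mod_cast Int.toNat_of_nonneg hs
    have e2 : ((t.toNat : ℕ) : ℝ) = (t : ℝ) := by exact_mod_cast Int.toNat_of_nonneg ht
    have e3 : ((u.toNat : ℕ) : ℝ) = (u : ℝ) := by exact_mod_cast Int.toNat_of_nonneg hu
    have e4 : ((v.toNat : ℕ) : ℝ) = (v : ℝ) := by exact_mod_cast Int.toNat_of_nonneg hv
    rw [e1, e2, e3, e4]
    have hP' : (p:ℝ) = (a:ℝ)*m*t + b*u + c*m*v := by exact_mod_cast hP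
    have hQ' : (q:ℝ) = (a:ℝ)*s + c*u + b*v := by exact_mod_cast hQ
    linear_combination hP' + Real.sqrt m * hQ' - ((a:ℝ)*t + (c:ℝ)*v) * hr

end Stmt18Aux

theorem stmt_18 (m a b c : ℤ) (hm : 0 < m) (hsq : ¬ IsSquare m)
    (ha : 0 < a) (hb : 0 < b) (hc : 0 < c)
    (hgcd : Int.gcd (a * m) (b ^ 2 - c ^ 2 * m) = 1) :
    ∀ w : ℝ, inZsqrt m w →
      (inFrob m ((a : ℝ) * Real.sqrt m) ((b : ℝ) + c * Real.sqrt m) w ↔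
        inNsqrt m (w - ((a : ℝ) * Real.sqrt m - 1) * ((b : ℝ) + c * Real.sqrt m - 1)
          * (1 + Real.sqrt m))) := by
  intro w hwz
  obtain ⟨p, q, hw⟩ := hwz
  have hm0 : (0:ℝ) ≤ (m:ℝ) := by exact_mod_cast hm.le
  have hirr : Irrational (Real.sqrt m) :=
    (irrational_sqrt_intCast_iff_of_nonneg hm.le).mpr hsq
  have hr : Real.sqrt m * Real.sqrt m = (m:ℝ) := Real.mul_self_sqrt hm0
  constructor
  · rintro ⟨-, hfrob⟩
    have hint : ∀ n₁ n₂ : ℤ, 0 ≤ n₁ → 0 ≤ n₂ → intS m a b c (p+n₁) (q+n₂) := by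
      intro n₁ n₂ h1 h2
      have hsg := hfrob ((n₁.toNat : ℝ) + n₂.toNat * Real.sqrt m) ⟨n₁.toNat, n₂.toNat, rfl⟩
      have hx : w + ((n₁.toNat : ℝ) + n₂.toNat * Real.sqrt m)
          = ((p+n₁ : ℤ):ℝ) + ((q+n₂ : ℤ):ℝ) * Real.sqrt m := by
        rw [hw]
        have e1 : ((n₁.toNat : ℕ) : ℝ) = (n₁ : ℝ) := by exact_mod_cast Int.toNat_of_nonneg h1
        have e2 : ((n₂.toNat : ℕ) : ℝ) = (n₂ : ℝ) := by exact_mod_cast Int.toNat_of_nonneg h2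
        rw [e1, e2]; push_cast; ring
      rw [hx] at hsg
      exact (Stmt18Aux.sg_iff hm hirr _ _).mp hsg
    obtain ⟨h1, h2⟩ := (Stmt18Aux.central hm ha hb hc hgcd p q).mp hint
    refine ⟨(p - (b*(a*m-1) + c*m*(a-1) - a*m + 1)).toNat,
      (q - (c*(a*m-1) + b*(a-1) - a + 1)).toNat, ?_⟩
    have e1 : (((p - (b*(a*m-1) + c*m*(a-1) - a*m + 1)).toNat : ℕ) : ℝ)
        = ((p - (b*(a*m-1) + c*m*(a-1) - a*m + 1) : ℤ) : ℝ) := by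
      exact_mod_cast Int.toNat_of_nonneg (sub_nonneg.mpr h1)
    have e2 : (((q - (c*(a*m-1) + b*(a-1) - a + 1)).toNat : ℕ) : ℝ)
        = ((q - (c*(a*m-1) + b*(a-1) - a + 1) : ℤ) : ℝ) := by
      exact_mod_cast Int.toNat_of_nonneg (sub_nonneg.mpr h2)
    rw [e1, e2, hw]
    push_cast
    linear_combination (-(a:ℝ)*c*Real.sqrt m - ((a:ℝ)*b - a - c + a*c)) * hr
  · rintro ⟨n₁, n₂, hn⟩
    rw [hw] at hn
    have key : ((p - (b*(a*m-1) + c*m*(a-1) - a*m + 1) : ℤ):ℝ)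
        + ((q - (c*(a*m-1) + b*(a-1) - a + 1) : ℤ):ℝ) * Real.sqrt m
        = ((n₁ : ℤ):ℝ) + ((n₂ : ℤ):ℝ) * Real.sqrt m := by
      push_cast
      linear_combination hn + ((a:ℝ)*c*Real.sqrt m + ((a:ℝ)*b - a - c + a*c)) * hr
    obtain ⟨h1, h2⟩ := Stmt18Aux.coord_eq hirr key
    have hp : b*(a*m-1) + c*m*(a-1) - a*m + 1 ≤ p := by
      have := Int.natCast_nonneg n₁; linarith [h1 ▸ this]
    have hq : c*(a*m-1) + b*(a-1) - a + 1 ≤ q := by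
      have := Int.natCast_nonneg n₂; linarith [h2 ▸ this]
    refine ⟨⟨p, q, hw⟩, ?_⟩
    rintro n ⟨k₁, k₂, hk⟩
    have hmem : intS m a b c (p + k₁) (q + k₂) :=
      (Stmt18Aux.central hm ha hb hc hgcd p q).mpr ⟨hp, hq⟩ k₁ k₂
        (Int.natCast_nonneg k₁) (Int.natCast_nonneg k₂)
    have hsg := (Stmt18Aux.sg_iff hm hirr _ _).mpr hmem
    have hx : ((p + k₁ : ℤ):ℝ) + ((q + k₂ : ℤ):ℝ) * Real.sqrt m = w + n := by
      rw [hw, hk]; push_cast; ring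
    rwa [hx] at hsg
end

section
/- Let α₁, α₂ ∈ ℕ[√m]\{0} generate the unit ideal in ℤ[√m], and suppose at least one of α₁, α₂ has either its rational part or its irrational part equal to 0. Then Frob(α₁, α₂) = (α₁ - 1)(α₂ - 1)(1 + √m) + ℕ[√m]. -/
/-- Integer-coordinate version of membership in the semigroup `SG(α₁, α₂)`,
when `α₁` is "pure" with multiplication lattice `A₁ℤ ⊕ A₂ℤ√m` and `α₂ = c + d√m`. -/
def SGZ (m A₁ A₂ c d T₁ T₂ : ℤ) : Prop :=
  ∃ r s k l : ℤ, 0 ≤ r ∧ 0 ≤ s ∧ 0 ≤ k ∧ 0 ≤ l ∧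
    T₁ = r * c + s * (m * d) + A₁ * k ∧ T₂ = r * d + s * c + A₂ * l

lemma cancelZ {m A₁ A₂ c d e f P Q u v R S : ℤ}
    (h21 : A₁ = A₂ * u) (h1m : A₂ * m = A₁ * v)
    (hu1 : e * c + f * (d * m) = 1 + A₁ * P) (hu2 : e * d + f * c = A₂ * Q)
    (h1 : A₁ ∣ R * c + S * (m * d)) (h2 : A₂ ∣ R * d + S * c) :
    A₁ ∣ R ∧ A₂ ∣ S := by
  obtain ⟨G, hG⟩ := h1
  obtain ⟨H, hH⟩ := h2
  constructor
  · refine ⟨e * G + f * v * H - P * R - v * Q * S, ?_⟩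
    linear_combination e * hG + (f * m) * hH - R * hu1 - (m * S) * hu2 + (f * H - Q * S) * h1m
  · refine ⟨e * H + u * f * G - Q * R - u * P * S, ?_⟩
    linear_combination e * hH + f * hG - R * hu2 - S * hu1 + (f * G - P * S) * h21

lemma coverZ {m A₁ A₂ c d e f P Q u v : ℤ}
    (hm : 0 < m) (hA₁ : 0 < A₁) (hA₂ : 0 < A₂)
    (h21 : A₁ = A₂ * u) (h1m : A₂ * m = A₁ * v)
    (hc : 0 ≤ c) (hd : 0 ≤ d)
    (hu1 : e * c + f * (d * m) = 1 + A₁ * P) (hu2 : e * d + f * c = A₂ * Q)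
    (T₁ T₂ : ℤ)
    (h1 : (A₁ - 1) * c + (A₂ - 1) * (m * d) - (A₁ - 1) ≤ T₁)
    (h2 : (A₁ - 1) * d + (A₂ - 1) * c - (A₂ - 1) ≤ T₂) :
    SGZ m A₁ A₂ c d T₁ T₂ := by
  set r : ℤ := (e * T₁ + f * m * T₂) % A₁ with hrdef
  set s : ℤ := (e * T₂ + f * T₁) % A₂ with hsdef
  have hr0 : 0 ≤ r := Int.emod_nonneg _ (by omega)
  have hrlt : r < A₁ := Int.emod_lt_of_pos _ hA₁
  have hs0 : 0 ≤ s := Int.emod_nonneg _ (by omega)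
  have hslt : s < A₂ := Int.emod_lt_of_pos _ hA₂
  have er : r = (e * T₁ + f * m * T₂) - A₁ * ((e * T₁ + f * m * T₂) / A₁) := by
    rw [hrdef, Int.emod_def]
  have es : s = (e * T₂ + f * T₁) - A₂ * ((e * T₂ + f * T₁) / A₂) := by
    rw [hsdef, Int.emod_def]
  set Q₁ : ℤ := (e * T₁ + f * m * T₂) / A₁
  set Q₂ : ℤ := (e * T₂ + f * T₁) / A₂
  have hdvd1 : T₁ - (r * c + s * (m * d)) =
      A₁ * (-(P * T₁) - v * Q * T₂ + Q₁ * c + v * Q₂ * d) := by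
    rw [er, es]
    linear_combination (-T₁) * hu1 + (-(m * T₂)) * hu2 + (Q₂ * d - Q * T₂) * h1m
  have hdvd2 : T₂ - (r * d + s * c) =
      A₂ * (-(u * P * T₂) - Q * T₁ + u * Q₁ * d + Q₂ * c) := by
    rw [er, es]
    linear_combination (-T₂) * hu1 + (-T₁) * hu2 + (Q₁ * d - P * T₂) * h21
  set k : ℤ := -(P * T₁) - v * Q * T₂ + Q₁ * c + v * Q₂ * d
  set l : ℤ := -(u * P * T₂) - Q * T₁ + u * Q₁ * d + Q₂ * c
  have hb1 : r * c ≤ (A₁ - 1) * c := mul_le_mul_of_nonneg_right (by omega) hc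
  have hb2 : s * (m * d) ≤ (A₂ - 1) * (m * d) :=
    mul_le_mul_of_nonneg_right (by omega) (mul_nonneg hm.le hd)
  have hb3 : r * d ≤ (A₁ - 1) * d := mul_le_mul_of_nonneg_right (by omega) hd
  have hb4 : s * c ≤ (A₂ - 1) * c := mul_le_mul_of_nonneg_right (by omega) hc
  have hk : 0 ≤ k := by
    have h' : A₁ * (-1) < A₁ * k := by nlinarith
    have := lt_of_mul_lt_mul_left h' hA₁.le
    omega
  have hl : 0 ≤ l := by
    have h' : A₂ * (-1) < A₂ * l := by nlinarith
    have := lt_of_mul_lt_mul_left h' hA₂.le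
    omega
  exact ⟨r, s, k, l, hr0, hs0, hk, hl, by linarith, by linarith⟩

lemma sharp1Z {m A₁ A₂ c d e f P Q u v : ℤ}
    (hm : 0 < m) (hA₁ : 0 < A₁) (hA₂ : 0 < A₂)
    (h21 : A₁ = A₂ * u) (h1m : A₂ * m = A₁ * v)
    (hc : 0 ≤ c) (hd : 0 ≤ d)
    (hu1 : e * c + f * (d * m) = 1 + A₁ * P) (hu2 : e * d + f * c = A₂ * Q)
    (T₂ : ℤ)
    (hT₂ : A₂ ∣ T₂ - ((A₁ - 1) * d + (A₂ - 1) * c - (A₂ - 1) - 1)) :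
    ¬ SGZ m A₁ A₂ c d ((A₁ - 1) * c + (A₂ - 1) * (m * d) - (A₁ - 1) - 1) T₂ := by
  rintro ⟨r, s, k, l, hr, hs, hk, hl, e₁, e₂⟩
  obtain ⟨j, hj⟩ := hT₂
  have d1 : A₁ ∣ (r + 1) * c + (s + 1) * (m * d) := by
    refine ⟨c + v * d - 1 - k, ?_⟩
    linear_combination -e₁ + d * h1m
  have d2 : A₂ ∣ (r + 1) * d + (s + 1) * c := by
    refine ⟨u * d + c - 1 - l + j, ?_⟩
    linear_combination -e₂ + hj + d * h21
  obtain ⟨hR, hS⟩ := cancelZ h21 h1m hu1 hu2 d1 d2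
  have hr' : A₁ ≤ r + 1 := Int.le_of_dvd (by omega) hR
  have hs' : A₂ ≤ s + 1 := Int.le_of_dvd (by omega) hS
  have hb1 : (A₁ - 1) * c ≤ r * c := mul_le_mul_of_nonneg_right (by omega) hc
  have hb2 : (A₂ - 1) * (m * d) ≤ s * (m * d) :=
    mul_le_mul_of_nonneg_right (by omega) (mul_nonneg hm.le hd)
  have hb5 : 0 ≤ A₁ * k := mul_nonneg hA₁.le hk
  linarith

lemma sharp2Z {m A₁ A₂ c d e f P Q u v : ℤ}
    (hm : 0 < m) (hA₁ : 0 < A₁) (hA₂ : 0 < A₂)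
    (h21 : A₁ = A₂ * u) (h1m : A₂ * m = A₁ * v)
    (hc : 0 ≤ c) (hd : 0 ≤ d)
    (hu1 : e * c + f * (d * m) = 1 + A₁ * P) (hu2 : e * d + f * c = A₂ * Q)
    (T₁ : ℤ)
    (hT₁ : A₁ ∣ T₁ - ((A₁ - 1) * c + (A₂ - 1) * (m * d) - (A₁ - 1) - 1)) :
    ¬ SGZ m A₁ A₂ c d T₁ ((A₁ - 1) * d + (A₂ - 1) * c - (A₂ - 1) - 1) := by
  rintro ⟨r, s, k, l, hr, hs, hk, hl, e₁, e₂⟩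
  obtain ⟨j, hj⟩ := hT₁
  have d1 : A₁ ∣ (r + 1) * c + (s + 1) * (m * d) := by
    refine ⟨c + v * d - 1 - k + j, ?_⟩
    linear_combination -e₁ + hj + d * h1m
  have d2 : A₂ ∣ (r + 1) * d + (s + 1) * c := by
    refine ⟨u * d + c - 1 - l, ?_⟩
    linear_combination -e₂ + d * h21
  obtain ⟨hR, hS⟩ := cancelZ h21 h1m hu1 hu2 d1 d2
  have hr' : A₁ ≤ r + 1 := Int.le_of_dvd (by omega) hR
  have hs' : A₂ ≤ s + 1 := Int.le_of_dvd (by omega) hS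
  have hb1 : (A₁ - 1) * d ≤ r * d := mul_le_mul_of_nonneg_right (by omega) hd
  have hb2 : (A₂ - 1) * c ≤ s * c := mul_le_mul_of_nonneg_right (by omega) hc
  have hb5 : 0 ≤ A₂ * l := mul_nonneg hA₂.le hl
  linarith

lemma coeffs_eq {s : ℝ} (hs : Irrational s) {p q p' q' : ℤ}
    (h : (p : ℝ) + q * s = p' + q' * s) : p = p' ∧ q = q' := by
  rcases eq_or_ne q q' with rfl | hne
  · refine ⟨?_, rfl⟩
    have : (p : ℝ) = p' := by linarith
    exact_mod_cast this
  · exfalso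
    have hq : ((q' : ℝ)) - q ≠ 0 := by
      have : (q' : ℝ) ≠ (q : ℝ) := by exact_mod_cast hne.symm
      exact sub_ne_zero.mpr this
    have hseq : s = ((p : ℝ) - p') / ((q' : ℝ) - q) := by
      field_simp
      linarith
    apply hs
    refine ⟨((p - p' : ℤ) : ℚ) / ((q' - q : ℤ) : ℚ), ?_⟩
    rw [hseq]
    push_cast
    ring

lemma master (m : ℤ) (s : ℝ) (A₁ A₂ c d e f P Q u v : ℤ)
    (hm : 0 < m) (hsd : s = Real.sqrt (m : ℝ)) (hs2 : s * s = (m : ℝ))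
    (hsi : Irrational s)
    (hA₁ : 0 < A₁) (hA₂ : 0 < A₂) (h21 : A₁ = A₂ * u) (h1m : A₂ * m = A₁ * v)
    (hc : 0 ≤ c) (hd : 0 ≤ d)
    (hu1 : e * c + f * (d * m) = 1 + A₁ * P) (hu2 : e * d + f * c = A₂ * Q)
    (α₁ α₂ : ℝ) (hα₂ : α₂ = (c : ℝ) + (d : ℝ) * s)
    (hfw : ∀ p q : ℕ, ∃ k l : ℕ, ((p : ℝ) + (q : ℝ) * s) * α₁ =
      (A₁ : ℝ) * k + (A₂ : ℝ) * l * s)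
    (hbw : ∀ k l : ℕ, ∃ p q : ℕ, ((p : ℝ) + (q : ℝ) * s) * α₁ =
      (A₁ : ℝ) * k + (A₂ : ℝ) * l * s)
    (hδ : (α₁ - 1) * (α₂ - 1) * (1 + s) =
      (((A₁ - 1) * c + (A₂ - 1) * (m * d) - (A₁ - 1) : ℤ) : ℝ) +
      (((A₁ - 1) * d + (A₂ - 1) * c - (A₂ - 1) : ℤ) : ℝ) * s) :
    ∀ w : ℝ, inZsqrt m w →
      (inFrob m α₁ α₂ w ↔ inNsqrt m (w - (α₁ - 1) * (α₂ - 1) * (1 + Real.sqrt m))) := by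
  obtain ⟨D₁, hD₁⟩ : ∃ x : ℤ, x = (A₁ - 1) * c + (A₂ - 1) * (m * d) - (A₁ - 1) := ⟨_, rfl⟩
  obtain ⟨D₂, hD₂⟩ : ∃ x : ℤ, x = (A₁ - 1) * d + (A₂ - 1) * c - (A₂ - 1) := ⟨_, rfl⟩
  rw [← hD₁, ← hD₂] at hδ
  -- characterization of inNsqrt for integer-coefficient elements
  have hNchar : ∀ X₁ X₂ : ℤ, inNsqrt m ((X₁ : ℝ) + (X₂ : ℝ) * s) ↔ (0 ≤ X₁ ∧ 0 ≤ X₂) := by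
    intro X₁ X₂
    constructor
    · rintro ⟨p, q, hpq⟩
      rw [← hsd] at hpq
      have : (X₁ : ℝ) + X₂ * s = ((p : ℤ) : ℝ) + ((q : ℤ) : ℝ) * s := by
        push_cast
        push_cast at hpq
        linarith [hpq]
      obtain ⟨h1, h2⟩ := coeffs_eq hsi this
      omega
    · rintro ⟨h1, h2⟩
      refine ⟨X₁.toNat, X₂.toNat, ?_⟩
      rw [← hsd]
      have e1 : ((X₁.toNat : ℕ) : ℝ) = (X₁ : ℝ) := by exact_mod_cast Int.toNat_of_nonneg h1
      have e2 : ((X₂.toNat : ℕ) : ℝ) = (X₂ : ℝ) := by exact_mod_cast Int.toNat_of_nonneg h2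
      rw [e1, e2]
  -- characterization of inSG for integer-coefficient elements
  have hSG : ∀ T₁ T₂ : ℤ, inSG m α₁ α₂ ((T₁ : ℝ) + (T₂ : ℝ) * s) ↔ SGZ m A₁ A₂ c d T₁ T₂ := by
    intro T₁ T₂
    constructor
    · rintro ⟨l₁, l₂, ⟨p, q, rfl⟩, ⟨r, s', rfl⟩, heq⟩
      rw [← hsd] at heq
      obtain ⟨k, l, hkl⟩ := hfw p q
      have key : (T₁ : ℝ) + (T₂ : ℝ) * s =
          ((A₁ * k + r * c + s' * (m * d) : ℤ) : ℝ) +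
          ((A₂ * l + r * d + s' * c : ℤ) : ℝ) * s := by
        push_cast
        push_cast at heq hkl
        rw [hα₂] at heq
        linear_combination heq + hkl + ((s' : ℝ) * d) * hs2
      obtain ⟨h1, h2⟩ := coeffs_eq hsi key
      exact ⟨r, s', k, l, by positivity, by positivity, by positivity, by positivity,
        by omega, by omega⟩
    · rintro ⟨r, s', k, l, hr, hs', hk, hl, e₁, e₂⟩
      obtain ⟨p, q, hpq⟩ := hbw k.toNat l.toNat
      have ek : ((k.toNat : ℕ) : ℝ) = (k : ℝ) := by exact_mod_cast Int.toNat_of_nonneg hk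
      have el : ((l.toNat : ℕ) : ℝ) = (l : ℝ) := by exact_mod_cast Int.toNat_of_nonneg hl
      have er : ((r.toNat : ℕ) : ℝ) = (r : ℝ) := by exact_mod_cast Int.toNat_of_nonneg hr
      have es : ((s'.toNat : ℕ) : ℝ) = (s' : ℝ) := by exact_mod_cast Int.toNat_of_nonneg hs'
      refine ⟨(p : ℝ) + (q : ℝ) * s, ((r.toNat : ℕ) : ℝ) + ((s'.toNat : ℕ) : ℝ) * s,
        ⟨p, q, by rw [← hsd]⟩, ⟨r.toNat, s'.toNat, by rw [← hsd]⟩, ?_⟩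
      rw [ek, el] at hpq
      rw [hα₂, e₁, e₂, er, es]
      push_cast
      linear_combination -hpq - ((s' : ℝ) * d) * hs2
  rintro w ⟨W₁, W₂, rfl⟩
  rw [← hsd, hδ]
  have hsub : (W₁ : ℝ) + (W₂ : ℝ) * s - ((D₁ : ℝ) + (D₂ : ℝ) * s) =
      ((W₁ - D₁ : ℤ) : ℝ) + ((W₂ - D₂ : ℤ) : ℝ) * s := by push_cast; ring
  rw [hsub, hNchar]
  constructor
  · -- Frob → above the conductor
    intro hF
    by_contra hcon
    rw [not_and_or] at hcon
    have hsplit : W₁ < D₁ ∨ (D₁ ≤ W₁ ∧ W₂ < D₂) := by omega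
    rcases hsplit with hW₁ | ⟨hW₁, hW₂⟩
    · -- rational part deficient: use sharp1Z
      have hx0 : (0 : ℤ) ≤ D₁ - 1 - W₁ := by omega
      have hy0 : (0 : ℤ) ≤ (D₂ - 1 - W₂) % A₂ := Int.emod_nonneg _ (by omega)
      have hyd : (D₂ - 1 - W₂) % A₂ =
          (D₂ - 1 - W₂) - A₂ * ((D₂ - 1 - W₂) / A₂) := Int.emod_def _ _
      have hIn := hF.2 (((D₁ - 1 - W₁).toNat : ℝ) +
          (((D₂ - 1 - W₂) % A₂).toNat : ℝ) * Real.sqrt m) ⟨_, _, rfl⟩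
      rw [← hsd] at hIn
      have heq : (W₁ : ℝ) + (W₂ : ℝ) * s + (((D₁ - 1 - W₁).toNat : ℝ) +
          (((D₂ - 1 - W₂) % A₂).toNat : ℝ) * s) =
          ((D₁ - 1 : ℤ) : ℝ) + ((W₂ + (D₂ - 1 - W₂) % A₂ : ℤ) : ℝ) * s := by
        have ex : (((D₁ - 1 - W₁).toNat : ℕ) : ℝ) = ((D₁ - 1 - W₁ : ℤ) : ℝ) := by
          exact_mod_cast Int.toNat_of_nonneg hx0
        have ey : ((((D₂ - 1 - W₂) % A₂).toNat : ℕ) : ℝ) = (((D₂ - 1 - W₂) % A₂ : ℤ) : ℝ) := by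
          exact_mod_cast Int.toNat_of_nonneg hy0
        rw [ex, ey]
        push_cast
        ring
      rw [heq, hSG] at hIn
      have hT₂ : A₂ ∣ (W₂ + (D₂ - 1 - W₂) % A₂) -
          ((A₁ - 1) * d + (A₂ - 1) * c - (A₂ - 1) - 1) :=
        ⟨-((D₂ - 1 - W₂) / A₂), by rw [← hD₂]; linarith⟩
      have hsharp := sharp1Z (u := u) (v := v) hm hA₁ hA₂ h21 h1m hc hd hu1 hu2
        (W₂ + (D₂ - 1 - W₂) % A₂) hT₂
      rw [← hD₁] at hsharp
      exact hsharp hIn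
    · -- irrational part deficient: use sharp2Z
      have hx0 : (0 : ℤ) ≤ (D₁ - 1 - W₁) % A₁ := Int.emod_nonneg _ (by omega)
      have hy0 : (0 : ℤ) ≤ D₂ - 1 - W₂ := by omega
      have hxd : (D₁ - 1 - W₁) % A₁ =
          (D₁ - 1 - W₁) - A₁ * ((D₁ - 1 - W₁) / A₁) := Int.emod_def _ _
      have hIn := hF.2 ((((D₁ - 1 - W₁) % A₁).toNat : ℝ) +
          ((D₂ - 1 - W₂).toNat : ℝ) * Real.sqrt m) ⟨_, _, rfl⟩
      rw [← hsd] at hIn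
      have heq : (W₁ : ℝ) + (W₂ : ℝ) * s + ((((D₁ - 1 - W₁) % A₁).toNat : ℝ) +
          ((D₂ - 1 - W₂).toNat : ℝ) * s) =
          ((W₁ + (D₁ - 1 - W₁) % A₁ : ℤ) : ℝ) + ((D₂ - 1 : ℤ) : ℝ) * s := by
        have ex : ((((D₁ - 1 - W₁) % A₁).toNat : ℕ) : ℝ) = (((D₁ - 1 - W₁) % A₁ : ℤ) : ℝ) := by
          exact_mod_cast Int.toNat_of_nonneg hx0
        have ey : (((D₂ - 1 - W₂).toNat : ℕ) : ℝ) = ((D₂ - 1 - W₂ : ℤ) : ℝ) := by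
          exact_mod_cast Int.toNat_of_nonneg hy0
        rw [ex, ey]
        push_cast
        ring
      rw [heq, hSG] at hIn
      have hT₁ : A₁ ∣ (W₁ + (D₁ - 1 - W₁) % A₁) -
          ((A₁ - 1) * c + (A₂ - 1) * (m * d) - (A₁ - 1) - 1) :=
        ⟨-((D₁ - 1 - W₁) / A₁), by rw [← hD₁]; linarith⟩
      have hsharp := sharp2Z (u := u) (v := v) hm hA₁ hA₂ h21 h1m hc hd hu1 hu2
        (W₁ + (D₁ - 1 - W₁) % A₁) hT₁
      rw [← hD₂] at hsharp
      exact hsharp hIn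
  · rintro ⟨h1, h2⟩
    constructor
    · exact ⟨W₁, W₂, by rw [← hsd]⟩
    · rintro n ⟨x, y, rfl⟩
      rw [← hsd]
      have heq : (W₁ : ℝ) + (W₂ : ℝ) * s + ((x : ℝ) + (y : ℝ) * s) =
          ((W₁ + x : ℤ) : ℝ) + ((W₂ + y : ℤ) : ℝ) * s := by push_cast; ring
      rw [heq, hSG]
      exact coverZ hm hA₁ hA₂ h21 h1m hc hd hu1 hu2 _ _
        (by rw [← hD₁]; omega) (by rw [← hD₂]; omega)

lemma inSG_swap {m : ℤ} {α β x : ℝ} (h : inSG m α β x) : inSG m β α x := by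
  obtain ⟨l₁, l₂, h1, h2, he⟩ := h
  exact ⟨l₂, l₁, h2, h1, by rw [he]; ring⟩

lemma inFrob_swap {m : ℤ} {α β w : ℝ} : inFrob m α β w ↔ inFrob m β α w := by
  constructor <;> rintro ⟨h1, h2⟩ <;> exact ⟨h1, fun n hn => inSG_swap (h2 n hn)⟩

lemma pureCase (m : ℤ) (hm : 0 < m) (hsq : ¬ IsSquare m) (α₁ α₂ : ℝ)
    (h₂ : inNsqrt m α₂) (h₁0 : α₁ ≠ 0)
    (hspan : ∃ x y : ℝ, inZsqrt m x ∧ inZsqrt m y ∧ x * α₁ + y * α₂ = 1)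
    (hpure : (∃ p : ℕ, α₁ = p) ∨ (∃ q : ℕ, α₁ = q * Real.sqrt m)) :
    ∀ w : ℝ, inZsqrt m w →
      (inFrob m α₁ α₂ w ↔ inNsqrt m (w - (α₁ - 1) * (α₂ - 1) * (1 + Real.sqrt m))) := by
  obtain ⟨s, hsd⟩ : ∃ s : ℝ, s = Real.sqrt (m : ℝ) := ⟨_, rfl⟩
  have hmR : (0 : ℝ) ≤ (m : ℝ) := by exact_mod_cast hm.le
  have hs2 : s * s = (m : ℝ) := by rw [hsd]; exact Real.mul_self_sqrt hmR
  have hsi : Irrational s := by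
    rw [hsd]; exact (irrational_sqrt_intCast_iff_of_nonneg hm.le).mpr hsq
  have hspos : 0 < s := by
    rw [hsd]; exact Real.sqrt_pos.mpr (by exact_mod_cast hm)
  obtain ⟨c, d, hα₂⟩ := h₂
  rw [← hsd] at hα₂
  obtain ⟨x, y, ⟨g, h, rfl⟩, ⟨e, f, rfl⟩, hxy⟩ := hspan
  rw [← hsd] at hxy
  rcases hpure with ⟨a, hα₁⟩ | ⟨b, hα₁⟩
  · -- α₁ = a ∈ ℕ
    have ha : a ≠ 0 := by rintro rfl; exact h₁0 (by rw [hα₁]; norm_num)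
    have haZ : (0 : ℤ) < (a : ℤ) := by exact_mod_cast Nat.pos_of_ne_zero ha
    have key : ((g * a + e * c + f * d * m : ℤ) : ℝ) + ((h * a + e * d + f * c : ℤ) : ℝ) * s =
        ((1 : ℤ) : ℝ) + ((0 : ℤ) : ℝ) * s := by
      rw [hα₁, hα₂] at hxy
      push_cast
      linear_combination hxy - ((f : ℝ) * d) * hs2
    obtain ⟨k1, k2⟩ := coeffs_eq hsi key
    refine master m s (a : ℤ) (a : ℤ) (c : ℤ) (d : ℤ) e f (-g) (-h) 1 m hm hsd hs2 hsi
      haZ haZ (by ring) (by ring) (by positivity) (by positivity) (by linear_combination k1)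
      (by linear_combination k2) α₁ α₂ (by rw [hα₂]; push_cast; ring) ?_ ?_ ?_
    · intro p q
      exact ⟨p, q, by rw [hα₁]; push_cast; ring⟩
    · intro k l
      exact ⟨k, l, by rw [hα₁]; push_cast; ring⟩
    · rw [hα₁, hα₂]
      push_cast
      linear_combination (((a : ℝ) - 1) * d) * hs2
  · -- α₁ = b√m
    have hb : b ≠ 0 := by
      rintro rfl
      exact h₁0 (by rw [hα₁]; norm_num)
    have hbZ : (0 : ℤ) < (b : ℤ) := by exact_mod_cast Nat.pos_of_ne_zero hb
    rw [← hsd] at hα₁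
    have key : ((h * b * m + e * c + f * d * m : ℤ) : ℝ) +
        ((g * b + e * d + f * c : ℤ) : ℝ) * s = ((1 : ℤ) : ℝ) + ((0 : ℤ) : ℝ) * s := by
      rw [hα₁, hα₂] at hxy
      push_cast
      linear_combination hxy - ((h : ℝ) * b + f * d) * hs2
    obtain ⟨k1, k2⟩ := coeffs_eq hsi key
    refine master m s ((b : ℤ) * m) (b : ℤ) (c : ℤ) (d : ℤ) e f (-h) (-g) m 1 hm hsd hs2 hsi
      (by positivity) hbZ (by ring) (by ring) (by positivity) (by positivity)
      (by linear_combination k1) (by linear_combination k2) α₁ α₂ (by rw [hα₂]; push_cast; ring) ?_ ?_ ?_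
    · intro p q
      refine ⟨q, p, ?_⟩
      rw [hα₁]
      push_cast
      linear_combination ((b : ℝ) * q) * hs2
    · intro k l
      refine ⟨l, k, ?_⟩
      rw [hα₁]
      push_cast
      linear_combination ((b : ℝ) * k) * hs2
    · rw [hα₁, hα₂]
      push_cast
      linear_combination ((b : ℝ) * d * s + (b : ℝ) * ((c : ℝ) - 1) + ((b : ℝ) - 1) * d) * hs2

theorem stmt_19 (m : ℤ) (hm : 0 < m) (hsq : ¬ IsSquare m)
    (α₁ α₂ : ℝ) (h₁ : inNsqrt m α₁) (h₂ : inNsqrt m α₂)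
    (h₁0 : α₁ ≠ 0) (h₂0 : α₂ ≠ 0)
    (hspan : ∃ x y : ℝ, inZsqrt m x ∧ inZsqrt m y ∧ x * α₁ + y * α₂ = 1)
    (hpart : (∃ p : ℕ, α₁ = p) ∨ (∃ q : ℕ, α₁ = q * Real.sqrt m) ∨
             (∃ p : ℕ, α₂ = p) ∨ (∃ q : ℕ, α₂ = q * Real.sqrt m)) :
    ∀ w : ℝ, inZsqrt m w →
      (inFrob m α₁ α₂ w ↔
        inNsqrt m (w - (α₁ - 1) * (α₂ - 1) * (1 + Real.sqrt m))) := by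
  have hspan' : ∃ x y : ℝ, inZsqrt m x ∧ inZsqrt m y ∧ x * α₂ + y * α₁ = 1 := by
    obtain ⟨x, y, hx, hy, hxy⟩ := hspan
    exact ⟨y, x, hy, hx, by linarith⟩
  have hcomm : (α₂ - 1) * (α₁ - 1) * (1 + Real.sqrt m) =
      (α₁ - 1) * (α₂ - 1) * (1 + Real.sqrt m) := by ring
  rcases hpart with h | h | h | h
  · exact pureCase m hm hsq α₁ α₂ h₂ h₁0 hspan (Or.inl h)
  · exact pureCase m hm hsq α₁ α₂ h₂ h₁0 hspan (Or.inr h)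
  · intro w hw
    rw [inFrob_swap, ← hcomm]
    exact pureCase m hm hsq α₂ α₁ h₁ h₂0 hspan' (Or.inl h) w hw
  · intro w hw
    rw [inFrob_swap, ← hcomm]
    exact pureCase m hm hsq α₂ α₁ h₁ h₂0 hspan' (Or.inr h) w hw
end
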